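/- arXiv:1811.01988 — 8 statements merged into one kernel-verified Lean document; each statement's English description precedes it below -/
import Mathlib

section
/- Let R_extended be the set of tuples (x, y, z, x̃^1, …, x̃^d) ∈ ℝ^η × ℝ × ℝ^d × (ℝ^η)^d such that z ∈ Δ^d, x̃^k ∈ z_k·D_{|k} for each k = 1,…,d, x = Σ_{k=1}^d x̃^k, and y = Σ_{k=1}^d (w^k · x̃^k + b^k z_k). Then: (i) the projection of R_extended onto the (x, y, z)-coordinates equals R_cayley; (ii) the projection onto the (x, y)-coordinates of those points of R_extended with z ∈ {0,1}^d equals S_max; and (iii) every extreme point of R_extended has z ∈ {0,1}^d. -/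
open scoped Pointwise

noncomputable section

/-- Dot product on `Fin n → ℝ`. -/
def dotp {n : ℕ} (w x : Fin n → ℝ) : ℝ := ∑ i, w i * x i

/-- The affine function `f^k(x) = w^k ⬝ x + b^k`. -/
def affK {η d : ℕ} (w : Fin d → Fin η → ℝ) (b : Fin d → ℝ) (k : Fin d) (x : Fin η → ℝ) : ℝ :=
  dotp (w k) x + b k

/-- `D_{|k}`: the part of the domain where `f^k` attains the maximum. -/
def DrestrK {η d : ℕ} (D : Set (Fin η → ℝ)) (w : Fin d → Fin η → ℝ) (b : Fin d → ℝ)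
    (k : Fin d) : Set (Fin η → ℝ) :=
  {x ∈ D | ∀ ℓ, affK w b ℓ x ≤ affK w b k x}

/-- `S_cayley = ∪_k {(x, f^k(x), e^k) : x ∈ D_{|k}}`. -/
def Scayley {η d : ℕ} (D : Set (Fin η → ℝ)) (w : Fin d → Fin η → ℝ) (b : Fin d → ℝ) :
    Set ((Fin η → ℝ) × ℝ × (Fin d → ℝ)) :=
  ⋃ k, (fun x => (x, affK w b k x, Pi.single k (1 : ℝ))) '' DrestrK D w b k

/-- The Cayley embedding `R_cayley = conv(S_cayley)`. -/
def Rcayley {η d : ℕ} (D : Set (Fin η → ℝ)) (w : Fin d → Fin η → ℝ) (b : Fin d → ℝ) :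
    Set ((Fin η → ℝ) × ℝ × (Fin d → ℝ)) :=
  convexHull ℝ (Scayley D w b)

/-- `S_max = {(x, max_k f^k(x)) : x ∈ D}`. -/
def Smax {η d : ℕ} (hd : 0 < d) (D : Set (Fin η → ℝ)) (w : Fin d → Fin η → ℝ)
    (b : Fin d → ℝ) : Set ((Fin η → ℝ) × ℝ) :=
  {q | q.1 ∈ D ∧
    q.2 = Finset.univ.sup' ⟨⟨0, hd⟩, Finset.mem_univ _⟩ fun k => affK w b k q.1}

/-!
`R_extended` is the image of Balas' lifted set
`{(z, x̃) | z ∈ Δ^d, x̃ₖ ∈ zₖ • D_{|k}}` under the linear map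
`(z, x̃) ↦ (∑ x̃ₖ, ∑ (wᵏ ⬝ x̃ₖ + bᵏ zₖ), z, x̃)`. Since every `D_{|k}` is convex and nonempty, the
lifted set is the convex hull of its points with `z = eᵏ`, namely `(eᵏ, x eᵏ)` for `x ∈ D_{|k}`:
writing `x̃ₖ = zₖ uₖ`, a point is the `z`-weighted combination of the `(eᵏ, uₖ eᵏ)`. These
generators are also exactly its points with binary `z`. Linear maps commute with convex hulls,
so (i) holds because the generators map onto `S_cayley`, (ii) because their `(x, y)`-images form
the union of the graphs of `fᵏ` over `D_{|k}`, which is the graph of `maxₖ fᵏ` over `D`, and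
(iii) because the extreme points of a convex hull lie in the generating set.
-/

open Finset

lemma dotp_eq_dotProduct {n : ℕ} (w x : Fin n → ℝ) : dotp w x = w ⬝ᵥ x := rfl

lemma isLinearMap_dotp {n : ℕ} (w : Fin n → ℝ) : IsLinearMap ℝ (dotp w) :=
  ⟨dotProduct_add w, fun c x => dotProduct_smul c w x⟩

lemma convex_setOf_forall_dotp_le {η m : ℕ} (A : Fin m → Fin η → ℝ) (c : Fin m → ℝ) :
    Convex ℝ {x | ∀ i, dotp (A i) x ≤ c i} := by
  simpa only [Set.ofPred_forall] using
    convex_iInter fun i => convex_halfSpace_le (isLinearMap_dotp (A i)) (c i)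

lemma exists_eq_single_of_mem_stdSimplex {ι : Type*} [Fintype ι] [DecidableEq ι] {z : ι → ℝ}
    (hz : z ∈ stdSimplex ℝ ι) (hbin : ∀ k, z k = 0 ∨ z k = 1) : ∃ k, z = Pi.single k 1 := by
  have hsum : ∑ j, z j ≠ 0 := by simp [hz.2]
  obtain ⟨k, -, hk⟩ := exists_ne_zero_of_sum_ne_zero hsum
  have hk1 : z k = 1 := (hbin k).resolve_left hk
  have hrest : ∑ j ∈ univ.erase k, z j = 0 := by
    linarith [add_sum_erase univ z (mem_univ k), hz.2]
  refine ⟨k, funext fun j => ?_⟩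
  rcases eq_or_ne j k with rfl | hj
  · simp [hk1]
  · rw [Pi.single_eq_of_ne hj]
    exact (sum_eq_zero_iff_of_nonneg fun i _ => hz.1 i).1 hrest j (mem_erase.2 ⟨hj, mem_univ j⟩)

section Balas

variable {ι E : Type*} [Fintype ι] [AddCommGroup E] [Module ℝ E]

def balasLift (C : ι → Set E) : Set ((ι → ℝ) × (ι → E)) :=
  {q | q.1 ∈ stdSimplex ℝ ι ∧ ∀ k, q.2 k ∈ q.1 k • C k}

lemma convex_balasLift {C : ι → Set E} (hC : ∀ k, Convex ℝ (C k)) : Convex ℝ (balasLift C) := by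
  rintro q ⟨hqz, hqx⟩ q' ⟨hqz', hqx'⟩ a a' ha ha' haa'
  refine ⟨convex_stdSimplex ℝ ι hqz hqz' ha ha' haa', fun k => ?_⟩
  have hmem := Set.add_mem_add (Set.smul_mem_smul_set (a := a) (hqx k))
    (Set.smul_mem_smul_set (a := a') (hqx' k))
  rw [smul_smul, smul_smul, ← (hC k).add_smul (mul_nonneg ha (hqz.1 k))
    (mul_nonneg ha' (hqz'.1 k))] at hmem
  exact hmem

variable [DecidableEq ι]

def balasVertex (k : ι) (x : E) : (ι → ℝ) × (ι → E) :=
  (Pi.single k 1, Pi.single k x)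

def balasGenerators (C : ι → Set E) : Set ((ι → ℝ) × (ι → E)) :=
  ⋃ k, balasVertex k '' C k

variable {C : ι → Set E}

lemma balasVertex_mem_balasLift (hCne : ∀ k, (C k).Nonempty) {k : ι} {x : E} (hx : x ∈ C k) :
    balasVertex k x ∈ balasLift C := by
  refine ⟨single_mem_stdSimplex ℝ k, fun j => ?_⟩
  rcases eq_or_ne j k with rfl | hj
  · simpa [balasVertex] using hx
  -- `0 • ∅ = ∅`, so `0 ∈ 0 • C j` needs `C j` nonempty.
  · simp [balasVertex, Pi.single_eq_of_ne hj, Set.zero_smul_set (hCne j)]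

lemma balasLift_subset_convexHull : balasLift C ⊆ convexHull ℝ (balasGenerators C) := by
  rintro q ⟨hz, hx⟩
  choose u hu hqu using fun k => Set.mem_smul_set.1 (hx k)
  have hq : q = ∑ k, q.1 k • balasVertex k (u k) := by
    ext1
    · simpa [balasVertex, Prod.fst_sum, ← Pi.single_smul] using (univ_sum_single q.1).symm
    · simpa [balasVertex, Prod.snd_sum, ← Pi.single_smul, hqu] using (univ_sum_single q.2).symm
  rw [hq]
  exact (convex_convexHull ℝ _).sum_mem (fun k _ => hz.1 k) hz.2 fun k _ =>
    subset_convexHull ℝ _ (Set.mem_iUnion_of_mem k (Set.mem_image_of_mem _ (hu k)))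

theorem balasLift_eq_convexHull (hC : ∀ k, Convex ℝ (C k)) (hCne : ∀ k, (C k).Nonempty) :
    balasLift C = convexHull ℝ (balasGenerators C) := by
  refine balasLift_subset_convexHull.antisymm (convexHull_min ?_ (convex_balasLift hC))
  rintro _ ⟨_, ⟨k, rfl⟩, x, hx, rfl⟩
  exact balasVertex_mem_balasLift hCne hx

theorem balasGenerators_eq_balasLift_inter (hCne : ∀ k, (C k).Nonempty) :
    balasGenerators C = balasLift C ∩ {q | ∀ k, q.1 k = 0 ∨ q.1 k = 1} := by
  ext q
  constructor
  · rintro ⟨_, ⟨k, rfl⟩, x, hx, rfl⟩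
    refine ⟨balasVertex_mem_balasLift hCne hx, fun j => ?_⟩
    rcases eq_or_ne j k with rfl | hj
    · simp [balasVertex]
    · simp [balasVertex, Pi.single_eq_of_ne hj]
  · rintro ⟨⟨hz, hx⟩, hbin⟩
    obtain ⟨k, hk⟩ := exists_eq_single_of_mem_stdSimplex hz hbin
    have hxk : q.2 k ∈ C k := by simpa [hk] using hx k
    refine Set.mem_iUnion_of_mem k ⟨q.2 k, hxk, Prod.ext hk.symm (funext fun j => ?_)⟩
    rcases eq_or_ne j k with rfl | hj
    · simp [balasVertex]
    · obtain ⟨u, -, hu⟩ := Set.mem_smul_set.1 (hx j)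
      simp [balasVertex, Pi.single_eq_of_ne hj, ← hu, hk]

end Balas

section Cayley

variable {η d : ℕ}

lemma convex_DrestrK {D : Set (Fin η → ℝ)} (hD : Convex ℝ D) (w : Fin d → Fin η → ℝ)
    (b : Fin d → ℝ) (k : Fin d) : Convex ℝ (DrestrK D w b k) := by
  have hsplit : DrestrK D w b k =
      D ∩ ⋂ ℓ, {x | dotp (w ℓ - w k) x ≤ b k - b ℓ} := by
    ext x
    simp only [DrestrK, affK, Set.mem_inter_iff, Set.mem_iInter, Set.mem_ofPred_eq,
      dotp_eq_dotProduct, sub_dotProduct]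
    refine and_congr_right fun _ => forall_congr' fun ℓ => ?_
    constructor <;> intro h <;> linarith
  rw [hsplit]
  exact hD.inter <| convex_iInter fun ℓ =>
    convex_halfSpace_le (isLinearMap_dotp (w ℓ - w k)) _

lemma DrestrK_nonempty {D : Set (Fin η → ℝ)} {w : Fin d → Fin η → ℝ} {b : Fin d → ℝ} {k : Fin d}
    (hk : ∃ x ∈ D, ∀ ℓ, ℓ ≠ k → affK w b ℓ x < affK w b k x) : (DrestrK D w b k).Nonempty := by
  obtain ⟨x, hx, hlt⟩ := hk
  refine ⟨x, hx, fun ℓ => ?_⟩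
  rcases eq_or_ne ℓ k with rfl | hne
  · exact le_rfl
  · exact (hlt ℓ hne).le

theorem Smax_eq_iUnion (hd : 0 < d) (D : Set (Fin η → ℝ)) (w : Fin d → Fin η → ℝ)
    (b : Fin d → ℝ) :
    Smax hd D w b = ⋃ k, (fun x => (x, affK w b k x)) '' DrestrK D w b k := by
  ext ⟨x, y⟩
  simp only [Smax, Set.mem_ofPred_eq, Set.mem_iUnion, Set.mem_image, Prod.mk.injEq]
  constructor
  · rintro ⟨hx, rfl⟩
    obtain ⟨k, -, hk⟩ := exists_mem_eq_sup' ⟨⟨0, hd⟩, mem_univ _⟩ fun k => affK w b k x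
    exact ⟨k, x, ⟨hx, fun ℓ => hk ▸ le_sup' (fun k => affK w b k x) (mem_univ ℓ)⟩, rfl, hk.symm⟩
  · rintro ⟨k, x, ⟨hx, hmax⟩, rfl, rfl⟩
    exact ⟨hx, (le_sup' (fun k => affK w b k x) (mem_univ k)).antisymm
      (sup'_le _ _ fun ℓ _ => hmax ℓ)⟩

def cayleyLift (w : Fin d → Fin η → ℝ) (b : Fin d → ℝ) :
    (Fin d → ℝ) × (Fin d → Fin η → ℝ) →ₗ[ℝ]
      (Fin η → ℝ) × ℝ × (Fin d → ℝ) × (Fin d → Fin η → ℝ) where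
  toFun q := (∑ k, q.2 k, ∑ k, (dotp (w k) (q.2 k) + b k * q.1 k), q)
  map_add' q q' := by
    simp only [Prod.fst_add, Prod.snd_add, Pi.add_apply, dotp_eq_dotProduct, dotProduct_add,
      mul_add, sum_add_distrib, Prod.mk_add_mk]
    ring_nf
  map_smul' c q := by
    simp only [Prod.smul_fst, Prod.smul_snd, Pi.smul_apply, dotp_eq_dotProduct, dotProduct_smul,
      smul_eq_mul, smul_sum, Prod.smul_mk, RingHom.id_apply, mul_sum]
    ring_nf

lemma cayleyLift_balasVertex (w : Fin d → Fin η → ℝ) (b : Fin d → ℝ) (k : Fin d)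
    (x : Fin η → ℝ) : cayleyLift w b (balasVertex k x) = (x, affK w b k x, balasVertex k x) := by
  simp only [cayleyLift, balasVertex, LinearMap.coe_mk, AddHom.coe_mk, Prod.mk.injEq, and_true]
  constructor
  · simp
  · rw [Fintype.sum_eq_single k fun j hj => by simp [Pi.single_eq_of_ne hj, dotp]]
    simp [affK]

lemma setOf_eq_image_cayleyLift (D : Set (Fin η → ℝ)) (w : Fin d → Fin η → ℝ) (b : Fin d → ℝ) :
    {p : (Fin η → ℝ) × ℝ × (Fin d → ℝ) × (Fin d → Fin η → ℝ) | p.2.2.1 ∈ stdSimplex ℝ (Fin d)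
      ∧ (∀ k, p.2.2.2 k ∈ p.2.2.1 k • DrestrK D w b k)
      ∧ p.1 = ∑ k, p.2.2.2 k
      ∧ p.2.1 = ∑ k, (dotp (w k) (p.2.2.2 k) + b k * p.2.2.1 k)}
      = cayleyLift w b '' balasLift (DrestrK D w b) := by
  ext p
  constructor
  · rintro ⟨hz, hxt, hx, hy⟩
    exact ⟨p.2.2, ⟨hz, hxt⟩, Prod.ext hx.symm (Prod.ext hy.symm rfl)⟩
  · rintro ⟨q, hq, rfl⟩
    exact ⟨hq.1, hq.2, rfl, rfl⟩

end Cayley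

theorem stmt0_general {η d : ℕ} (hd : 1 ≤ d)
    (w : Fin d → Fin η → ℝ) (b : Fin d → ℝ)
    (D : Set (Fin η → ℝ))
    (hDpoly : ∃ (m : ℕ) (A : Fin m → Fin η → ℝ) (c : Fin m → ℝ),
      D = {x | ∀ i, dotp (A i) x ≤ c i})
    (hirr : ∀ k, ∃ x ∈ D, ∀ ℓ, ℓ ≠ k → affK w b ℓ x < affK w b k x)
    (Rext : Set ((Fin η → ℝ) × ℝ × (Fin d → ℝ) × (Fin d → Fin η → ℝ)))
    (hRext : Rext = {p | p.2.2.1 ∈ stdSimplex ℝ (Fin d)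
      ∧ (∀ k, p.2.2.2 k ∈ p.2.2.1 k • DrestrK D w b k)
      ∧ p.1 = ∑ k, p.2.2.2 k
      ∧ p.2.1 = ∑ k, (dotp (w k) (p.2.2.2 k) + b k * p.2.2.1 k)}) :
    -- (i) projection onto (x, y, z) equals R_cayley
    ((fun p : (Fin η → ℝ) × ℝ × (Fin d → ℝ) × (Fin d → Fin η → ℝ) =>
        (p.1, p.2.1, p.2.2.1)) '' Rext = Rcayley D w b)
    -- (ii) projection onto (x, y) of the points with binary z equals S_max
    ∧ ((fun p : (Fin η → ℝ) × ℝ × (Fin d → ℝ) × (Fin d → Fin η → ℝ) =>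
        (p.1, p.2.1)) '' {p ∈ Rext | ∀ k, p.2.2.1 k = 0 ∨ p.2.2.1 k = 1}
        = Smax hd D w b)
    -- (iii) every extreme point of R_extended has binary z
    ∧ (∀ p ∈ Set.extremePoints ℝ Rext, ∀ k, p.2.2.1 k = 0 ∨ p.2.2.1 k = 1) := by
  have hC : ∀ k, Convex ℝ (DrestrK D w b k) := by
    obtain ⟨m, A, c, rfl⟩ := hDpoly
    exact convex_DrestrK (convex_setOf_forall_dotp_le A c) w b
  have hCne : ∀ k, (DrestrK D w b k).Nonempty := fun k => DrestrK_nonempty (hirr k)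
  have hR : Rext = convexHull ℝ (cayleyLift w b '' balasGenerators (DrestrK D w b)) := by
    rw [hRext, setOf_eq_image_cayleyLift, balasLift_eq_convexHull hC hCne,
      LinearMap.image_convexHull]
  have hbin : {p ∈ Rext | ∀ k, p.2.2.1 k = 0 ∨ p.2.2.1 k = 1} =
      cayleyLift w b '' balasGenerators (DrestrK D w b) := by
    rw [balasGenerators_eq_balasLift_inter hCne, hRext, setOf_eq_image_cayleyLift]
    exact (Set.image_inter_preimage _ _ _).symm
  have hgen : cayleyLift w b '' balasGenerators (DrestrK D w b) =
      ⋃ k, (fun x => (x, affK w b k x, balasVertex k x)) '' DrestrK D w b k := by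
    simp only [balasGenerators, Set.image_iUnion, Set.image_image, cayleyLift_balasVertex]
  refine ⟨?_, ?_, ?_⟩
  · rw [hR, IsLinearMap.image_convexHull ⟨fun _ _ => rfl, fun _ _ => rfl⟩, hgen, Rcayley,
      Scayley, Set.image_iUnion]
    simp only [Set.image_image]
    rfl
  · rw [hbin, hgen, Smax_eq_iUnion, Set.image_iUnion]
    simp only [Set.image_image]
  · intro p hp
    rw [hR] at hp
    exact (hbin ▸ extremePoints_convexHull_subset hp).2

theorem stmt0 {η d : ℕ} (hη : 1 ≤ η) (hd : 1 ≤ d)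
    (w : Fin d → Fin η → ℝ) (b : Fin d → ℝ)
    (D : Set (Fin η → ℝ))
    (hDpoly : ∃ (m : ℕ) (A : Fin m → Fin η → ℝ) (c : Fin m → ℝ),
      D = {x | ∀ i, dotp (A i) x ≤ c i})
    (hDne : D.Nonempty) (hDbd : Bornology.IsBounded D)
    (hirr : ∀ k, ∃ x ∈ D, ∀ ℓ, ℓ ≠ k → affK w b ℓ x < affK w b k x)
    (Rext : Set ((Fin η → ℝ) × ℝ × (Fin d → ℝ) × (Fin d → Fin η → ℝ)))
    (hRext : Rext = {p | p.2.2.1 ∈ stdSimplex ℝ (Fin d)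
      ∧ (∀ k, p.2.2.2 k ∈ p.2.2.1 k • DrestrK D w b k)
      ∧ p.1 = ∑ k, p.2.2.2 k
      ∧ p.2.1 = ∑ k, (dotp (w k) (p.2.2.2 k) + b k * p.2.2.1 k)}) :
    -- (i) projection onto (x, y, z) equals R_cayley
    ((fun p : (Fin η → ℝ) × ℝ × (Fin d → ℝ) × (Fin d → Fin η → ℝ) =>
        (p.1, p.2.1, p.2.2.1)) '' Rext = Rcayley D w b)
    -- (ii) projection onto (x, y) of the points with binary z equals S_max
    ∧ ((fun p : (Fin η → ℝ) × ℝ × (Fin d → ℝ) × (Fin d → Fin η → ℝ) =>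
        (p.1, p.2.1)) '' {p ∈ Rext | ∀ k, p.2.2.1 k = 0 ∨ p.2.2.1 k = 1}
        = Smax hd D w b)
    -- (iii) every extreme point of R_extended has binary z
    ∧ (∀ p ∈ Set.extremePoints ℝ Rext, ∀ k, p.2.2.1 k = 0 ∨ p.2.2.1 k = 1) :=
  stmt0_general hd w b D hDpoly hirr Rext hRext
end
end

section
/- Let d = 2. Fix x ∈ D and z ∈ Δ^2 such that there exist x̃^1, x̃^2 with x̃^k ∈ z_k·D_{|k} for k = 1, 2 and x = x̃^1 + x̃^2. Then the minimum of Σ_{k=1}^2 (w^k · x̃^k + b^k z_k), taken over all pairs (x̃^1, x̃^2) with x̃^k ∈ z_k·D_{|k} for k = 1, 2 and x = x̃^1 + x̃^2, equals max{w^1 · x + b^1, w^2 · x + b^2}. -/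
open scoped Pointwise

noncomputable section

lemma dotp_add {n : ℕ} (w u v : Fin n → ℝ) : dotp w (u + v) = dotp w u + dotp w v := by
  simp [dotp, mul_add, Finset.sum_add_distrib]

lemma dotp_smul {n : ℕ} (w : Fin n → ℝ) (t : ℝ) (u : Fin n → ℝ) :
    dotp w (t • u) = t * dotp w u := by
  simp only [dotp, Finset.mul_sum, Pi.smul_apply, smul_eq_mul]
  exact Finset.sum_congr rfl fun i _ => by ring

lemma aff_comb {n : ℕ} (w : Fin n → ℝ) (b : ℝ) (u v : Fin n → ℝ) (z0 z1 : ℝ)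
    (h : z0 + z1 = 1) :
    dotp w (z0 • u + z1 • v) + b = z0 * (dotp w u + b) + z1 * (dotp w v + b) := by
  rw [dotp_add, dotp_smul, dotp_smul]
  linear_combination (-b) * h

lemma scalar_core (z0 z1 g0 g1 : ℝ) (hz0 : 0 ≤ z0) (hz1 : 0 ≤ z1) (hzsum : z0 + z1 = 1)
    (hg0 : g0 ≤ 0) (hg1 : 0 ≤ g1) (hx : z0 * g0 + z1 * g1 ≤ 0) :
    ∃ sy sp : ℝ, 0 ≤ sy ∧ sy ≤ 1 ∧ 0 ≤ sp ∧ sp ≤ 1 ∧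
      (1 - sy) * g0 + sy * g1 ≤ 0 ∧ (1 - sp) * g0 + sp * g1 = 0 ∧
      z0 * sy + z1 * sp = z1 := by
  rcases hg1.eq_or_lt with hg1eq | hg1pos
  · exact ⟨0, 1, le_refl 0, zero_le_one, zero_le_one, le_refl 1,
      by linarith, by linarith, by linarith⟩
  · have hz0pos : 0 < z0 := by
      rcases hz0.eq_or_lt with h | h
      · exfalso; nlinarith
      · exact h
    have hδpos : 0 < g1 - g0 := by linarith
    refine ⟨z1 * (1 - (-g0 / (g1 - g0))) / z0, -g0 / (g1 - g0), ?_, ?_, ?_, ?_, ?_, ?_, ?_⟩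
    · have hsp1 : -g0 / (g1 - g0) ≤ 1 := by rw [div_le_one hδpos]; linarith
      exact div_nonneg (mul_nonneg hz1 (by linarith)) hz0pos.le
    · have hsp1 : -g0 / (g1 - g0) ≤ 1 := by rw [div_le_one hδpos]; linarith
      have hz1sp : z1 ≤ -g0 / (g1 - g0) := by
        rw [le_div_iff₀ hδpos]; nlinarith
      rw [div_le_one hz0pos]; nlinarith
    · exact div_nonneg (by linarith) hδpos.le
    · rw [div_le_one hδpos]; linarith
    · have hz1sp : z1 ≤ -g0 / (g1 - g0) := by
        rw [le_div_iff₀ hδpos]; nlinarith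
      have hsy : z1 * (1 - (-g0 / (g1 - g0))) / z0 ≤ -g0 / (g1 - g0) := by
        apply le_trans _ hz1sp
        rw [div_le_iff₀ hz0pos]; nlinarith
      have hspval : (1 - (-g0 / (g1 - g0))) * g0 + (-g0 / (g1 - g0)) * g1 = 0 := by
        field_simp; ring
      nlinarith [mul_le_mul_of_nonneg_right hsy hδpos.le]
    · field_simp; ring
    · field_simp; ring

lemma core {η : ℕ} (w0 w1 : Fin η → ℝ) (b0 b1 : ℝ) (D : Set (Fin η → ℝ))
    (hconv : Convex ℝ D)
    (z0 z1 : ℝ) (hz0 : 0 ≤ z0) (hz1 : 0 ≤ z1) (hzsum : z0 + z1 = 1)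
    (a0 a1 : Fin η → ℝ) (ha0D : a0 ∈ D) (ha1D : a1 ∈ D)
    (ha0 : dotp w1 a0 + b1 ≤ dotp w0 a0 + b0)
    (ha1 : dotp w0 a1 + b0 ≤ dotp w1 a1 + b1)
    (hx : dotp w1 (z0 • a0 + z1 • a1) + b1 ≤ dotp w0 (z0 • a0 + z1 • a1) + b0) :
    ∃ y0 y1, y0 ∈ D ∧ (dotp w1 y0 + b1 ≤ dotp w0 y0 + b0) ∧ y1 ∈ D ∧
      (dotp w0 y1 + b0 ≤ dotp w1 y1 + b1) ∧
      z0 • y0 + z1 • y1 = z0 • a0 + z1 • a1 ∧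
      z0 * (dotp w0 y0 + b0) + z1 * (dotp w1 y1 + b1)
        = dotp w0 (z0 • a0 + z1 • a1) + b0 := by
  have hc1 := aff_comb w1 b1 a0 a1 z0 z1 hzsum
  have hc0 := aff_comb w0 b0 a0 a1 z0 z1 hzsum
  obtain ⟨sy, sp, hsy0, hsy1, hsp0, hsp1, hy0neg, hpzero, hB⟩ :=
    scalar_core z0 z1 ((dotp w1 a0 + b1) - (dotp w0 a0 + b0))
      ((dotp w1 a1 + b1) - (dotp w0 a1 + b0)) hz0 hz1 hzsum
      (by linarith) (by linarith) (by nlinarith [hx])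
  have hA : z0 * (1 - sy) + z1 * (1 - sp) = z0 := by nlinarith [hB]
  refine ⟨(1 - sy) • a0 + sy • a1, (1 - sp) • a0 + sp • a1,
    hconv ha0D ha1D (by linarith) hsy0 (by ring),
    ?_, hconv ha0D ha1D (by linarith) hsp0 (by ring), ?_, ?_, ?_⟩
  · rw [aff_comb w1 b1 a0 a1 (1 - sy) sy (by ring),
      aff_comb w0 b0 a0 a1 (1 - sy) sy (by ring)]
    nlinarith [hy0neg]
  · rw [aff_comb w1 b1 a0 a1 (1 - sp) sp (by ring),
      aff_comb w0 b0 a0 a1 (1 - sp) sp (by ring)]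
    nlinarith [hpzero]
  · funext i
    simp only [Pi.add_apply, Pi.smul_apply, smul_eq_mul]
    linear_combination (a0 i) * hA + (a1 i) * hB
  · rw [aff_comb w1 b1 a0 a1 (1 - sp) sp (by ring),
      aff_comb w0 b0 a0 a1 (1 - sy) sy (by ring), hc0]
    linear_combination z1 * hpzero + (dotp w0 a0 + b0) * hA + (dotp w0 a1 + b0) * hB

lemma poly_convex {η m : ℕ} (A : Fin m → Fin η → ℝ) (c : Fin m → ℝ) :
    Convex ℝ {x : Fin η → ℝ | ∀ i, dotp (A i) x ≤ c i} := by
  intro p hp q hq a b' ha hb hab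
  intro i
  have h1 := hp i
  have h2 := hq i
  rw [dotp_add, dotp_smul, dotp_smul]
  have h3 : a * c i + b' * c i = c i := by linear_combination (c i) * hab
  nlinarith [mul_le_mul_of_nonneg_left h1 ha, mul_le_mul_of_nonneg_left h2 hb, h3]

theorem stmt5 {η : ℕ} (hη : 1 ≤ η)
    (w : Fin 2 → Fin η → ℝ) (b : Fin 2 → ℝ)
    (D : Set (Fin η → ℝ))
    (hDpoly : ∃ (m : ℕ) (A : Fin m → Fin η → ℝ) (c : Fin m → ℝ),
      D = {x | ∀ i, dotp (A i) x ≤ c i})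
    (hDne : D.Nonempty) (hDbd : Bornology.IsBounded D)
    (hirr : ∀ k, ∃ x ∈ D, ∀ ℓ, ℓ ≠ k → affK w b ℓ x < affK w b k x)
    (x : Fin η → ℝ) (hx : x ∈ D)
    (z : Fin 2 → ℝ) (hz : z ∈ stdSimplex ℝ (Fin 2))
    (hfeas : ∃ xt : Fin 2 → Fin η → ℝ,
      (∀ k, xt k ∈ z k • DrestrK D w b k) ∧ x = ∑ k, xt k) :
    IsLeast
      {s : ℝ | ∃ xt : Fin 2 → Fin η → ℝ,
        (∀ k, xt k ∈ z k • DrestrK D w b k) ∧ x = ∑ k, xt k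
        ∧ s = ∑ k, (dotp (w k) (xt k) + b k * z k)}
      (max (dotp (w 0) x + b 0) (dotp (w 1) x + b 1)) := by
  have hz0 : (0:ℝ) ≤ z 0 := hz.1 0
  have hz1 : (0:ℝ) ≤ z 1 := hz.1 1
  have hzsum : z 0 + z 1 = 1 := by
    have := hz.2
    rwa [Fin.sum_univ_two] at this
  obtain ⟨m, A, c, hD⟩ := hDpoly
  have hconv : Convex ℝ D := by rw [hD]; exact poly_convex A c
  obtain ⟨xt, hmem, hsumx⟩ := hfeas
  obtain ⟨a0, ha0, e0⟩ := Set.mem_smul_set.mp (hmem 0)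
  obtain ⟨a1, ha1, e1⟩ := Set.mem_smul_set.mp (hmem 1)
  have ha0D : a0 ∈ D := ha0.1
  have ha1D : a1 ∈ D := ha1.1
  have ha0c : dotp (w 1) a0 + b 1 ≤ dotp (w 0) a0 + b 0 := ha0.2 1
  have ha1c : dotp (w 0) a1 + b 0 ≤ dotp (w 1) a1 + b 1 := ha1.2 0
  have hxeq : x = z 0 • a0 + z 1 • a1 := by
    rw [hsumx, Fin.sum_univ_two, ← e0, ← e1]
  constructor
  · -- membership: the max is attained
    rcases le_total (dotp (w 1) x + b 1) (dotp (w 0) x + b 0) with h | h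
    · rw [max_eq_left h]
      rw [hxeq] at h
      obtain ⟨y0, y1, hy0D, hy0c, hy1D, hy1c, hsum, hval⟩ :=
        core (w 0) (w 1) (b 0) (b 1) D hconv (z 0) (z 1) hz0 hz1 hzsum
          a0 a1 ha0D ha1D ha0c ha1c h
      refine ⟨![z 0 • y0, z 1 • y1], ?_, ?_, ?_⟩
      · intro k
        fin_cases k
        · exact Set.smul_mem_smul_set ⟨hy0D, fun ℓ => by
            fin_cases ℓ <;> simp [affK] <;> linarith [hy0c]⟩
        · exact Set.smul_mem_smul_set ⟨hy1D, fun ℓ => by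
            fin_cases ℓ <;> simp [affK] <;> linarith [hy1c]⟩
      · rw [Fin.sum_univ_two, hxeq]
        simp only [Matrix.cons_val_zero, Matrix.cons_val_one, Matrix.head_cons]
        exact hsum.symm
      · rw [Fin.sum_univ_two]
        simp only [Matrix.cons_val_zero, Matrix.cons_val_one, Matrix.head_cons]
        rw [dotp_smul, dotp_smul, hxeq]
        linarith [hval]
    · rw [max_eq_right h]
      rw [hxeq] at h
      have h' : dotp (w 0) (z 1 • a1 + z 0 • a0) + b 0
          ≤ dotp (w 1) (z 1 • a1 + z 0 • a0) + b 1 := by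
        rw [add_comm (z 1 • a1) (z 0 • a0)]; exact h
      obtain ⟨y0, y1, hy0D, hy0c, hy1D, hy1c, hsum, hval⟩ :=
        core (w 1) (w 0) (b 1) (b 0) D hconv (z 1) (z 0) hz1 hz0 (by linarith)
          a1 a0 ha1D ha0D ha1c ha0c h'
      refine ⟨![z 0 • y1, z 1 • y0], ?_, ?_, ?_⟩
      · intro k
        fin_cases k
        · exact Set.smul_mem_smul_set ⟨hy1D, fun ℓ => by
            fin_cases ℓ <;> simp [affK] <;> linarith [hy1c]⟩
        · exact Set.smul_mem_smul_set ⟨hy0D, fun ℓ => by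
            fin_cases ℓ <;> simp [affK] <;> linarith [hy0c]⟩
      · rw [Fin.sum_univ_two, hxeq]
        simp only [Matrix.cons_val_zero, Matrix.cons_val_one, Matrix.head_cons]
        rw [add_comm (z 0 • y1) (z 1 • y0), hsum, add_comm]
      · rw [Fin.sum_univ_two]
        simp only [Matrix.cons_val_zero, Matrix.cons_val_one, Matrix.head_cons]
        rw [dotp_smul, dotp_smul, hxeq]
        have : dotp (w 1) (z 0 • a0 + z 1 • a1) + b 1
            = dotp (w 1) (z 1 • a1 + z 0 • a0) + b 1 := by
          rw [add_comm (z 1 • a1) (z 0 • a0)]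
        rw [this]
        linarith [hval]
  · -- lower bound
    rintro s ⟨xt', hmem', hsumx', hval'⟩
    obtain ⟨c0, hc0, f0⟩ := Set.mem_smul_set.mp (hmem' 0)
    obtain ⟨c1, hc1, f1⟩ := Set.mem_smul_set.mp (hmem' 1)
    have hxeq' : x = z 0 • c0 + z 1 • c1 := by
      rw [hsumx', Fin.sum_univ_two, ← f0, ← f1]
    have hs : s = z 0 * dotp (w 0) c0 + b 0 * z 0 + (z 1 * dotp (w 1) c1 + b 1 * z 1) := by
      rw [hval', Fin.sum_univ_two, ← f0, ← f1, dotp_smul, dotp_smul]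
    apply max_le
    · have hcomb := aff_comb (w 0) (b 0) c0 c1 (z 0) (z 1) hzsum
      rw [← hxeq'] at hcomb
      have h1 : dotp (w 0) c1 + b 0 ≤ dotp (w 1) c1 + b 1 := hc1.2 0
      nlinarith [mul_le_mul_of_nonneg_left h1 hz1]
    · have hcomb := aff_comb (w 1) (b 1) c0 c1 (z 0) (z 1) hzsum
      rw [← hxeq'] at hcomb
      have h1 : dotp (w 1) c0 + b 1 ≤ dotp (w 0) c0 + b 0 := hc0.2 1
      nlinarith [mul_le_mul_of_nonneg_left h1 hz0]
end
end

section
/- For every x ∈ Δ^p and z ∈ Δ^d, the infimum over α ∈ ℝ^p of ( Σ_{j=1}^p α_j x_j + Σ_{k=1}^d z_k · max_{j=1,…,p} (w^k_j − α_j) ) equals Transport(x, z; w^1, …, w^d), and this infimum is attained. -/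
/-!
The Lagrangian `L(α, β) = Σ_k Σ_j w^k_j β^k_j + Σ_j α_j (x_j - Σ_k β^k_j)` is affine in each
variable, and its maximum over the plans `β ≥ 0` with row sums `z` is the dual objective at `α`.
Sion's minimax theorem gives a saddle point `(a, b)` on `[0, R]^p × {plans}`. Once `R` exceeds
the spread of every row of weights, complementary slackness forces the columns of `b` to sum to
`x`; then `b` is a transport plan whose value is the dual objective at `a`, and weak duality
does the rest.
-/

noncomputable section

/-- The feasible objective values of the max-weight transportation problem:
`Transport(x, z; w¹, …, w^d)` is the greatest element of this set. -/
def transportSet (p d : ℕ) (w : Fin d → Fin p → ℝ) (x : Fin p → ℝ) (z : Fin d → ℝ) :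
    Set ℝ :=
  {s | ∃ β : Fin d → Fin p → ℝ, (∀ k j, 0 ≤ β k j)
    ∧ (∀ j, ∑ k, β k j = x j) ∧ (∀ k, ∑ j, β k j = z k)
    ∧ s = ∑ k, ∑ j, w k j * β k j}

open Finset

namespace Transport

variable {ι κ : Type*} [Fintype ι]

def rowPlans (z : κ → ℝ) : Set (κ → ι → ℝ) :=
  {β | (∀ k j, 0 ≤ β k j) ∧ ∀ k, ∑ j, β k j = z k}

theorem convex_rowPlans (z : κ → ℝ) : Convex ℝ (rowPlans (ι := ι) z) := by
  rintro β ⟨hβ0, hβz⟩ γ ⟨hγ0, hγz⟩ a b ha hb hab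
  refine ⟨fun k j => ?_, fun k => ?_⟩
  · have := hβ0 k j; have := hγ0 k j
    simp only [Pi.add_apply, Pi.smul_apply, smul_eq_mul]; positivity
  · simp only [Pi.add_apply, Pi.smul_apply, smul_eq_mul, sum_add_distrib, ← mul_sum, hβz, hγz]
    linear_combination z k * hab

theorem isCompact_rowPlans (z : κ → ℝ) : IsCompact (rowPlans (ι := ι) z) := by
  have hclosed : IsClosed (rowPlans (ι := ι) z) := by
    simp only [rowPlans, Set.ofPred_and, Set.ofPred_forall]
    exact (isClosed_iInter fun k => isClosed_iInter fun j =>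
      isClosed_le continuous_const (by fun_prop)).inter
        (isClosed_iInter fun k => isClosed_eq (by fun_prop) continuous_const)
  refine (isCompact_Icc (a := 0) (b := fun k _ => z k)).of_isClosed_subset hclosed
    fun β ⟨hβ0, hβz⟩ => ⟨fun k j => hβ0 k j, fun k j => ?_⟩
  exact (single_le_sum (fun j _ => hβ0 k j) (mem_univ j)).trans_eq (hβz k)

theorem sup'_sub_mul_nonneg [Nonempty ι] (f : ι → ℝ) (j : ι) {c : ℝ} (hc : 0 ≤ c) :
    0 ≤ (univ.sup' univ_nonempty f - f j) * c :=
  mul_nonneg (sub_nonneg.mpr (le_sup' f (mem_univ j))) hc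

variable [Fintype κ]

def lagrangian (w : κ → ι → ℝ) (x : ι → ℝ) (α : ι → ℝ) (β : κ → ι → ℝ) : ℝ :=
  ∑ k, ∑ j, w k j * β k j + ∑ j, α j * (x j - ∑ k, β k j)

def dualObjective [Nonempty ι] (w : κ → ι → ℝ) (x : ι → ℝ) (z : κ → ℝ) (α : ι → ℝ) : ℝ :=
  ∑ j, α j * x j + ∑ k, z k * univ.sup' univ_nonempty fun j => w k j - α j

variable {w : κ → ι → ℝ} {x : ι → ℝ} {z : κ → ℝ}

theorem continuous_lagrangian_left (w : κ → ι → ℝ) (x : ι → ℝ) (β : κ → ι → ℝ) :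
    Continuous fun α => lagrangian w x α β := by
  unfold lagrangian; fun_prop

theorem continuous_lagrangian_right (w : κ → ι → ℝ) (x : ι → ℝ) (α : ι → ℝ) :
    Continuous (lagrangian w x α) := by
  unfold lagrangian; fun_prop

theorem convexOn_lagrangian_left (w : κ → ι → ℝ) (x : ι → ℝ) (β : κ → ι → ℝ)
    {s : Set (ι → ℝ)} (hs : Convex ℝ s) : ConvexOn ℝ s fun α => lagrangian w x α β := by
  refine ⟨hs, fun α _ α' _ a b _ _ hab => le_of_eq ?_⟩
  simp only [lagrangian, Pi.add_apply, Pi.smul_apply, smul_eq_mul, add_mul, sum_add_distrib,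
    mul_assoc, ← mul_sum]
  linear_combination (-∑ k, ∑ j, w k j * β k j) * hab

theorem lagrangian_eq (w : κ → ι → ℝ) (x α : ι → ℝ) (β : κ → ι → ℝ) :
    lagrangian w x α β = ∑ j, α j * x j + ∑ k, ∑ j, (w k j - α j) * β k j := by
  simp only [lagrangian, mul_sub, sub_mul, sum_sub_distrib, mul_sum]
  rw [sum_comm (f := fun j k => α j * β k j)]
  ring

theorem concaveOn_lagrangian_right (w : κ → ι → ℝ) (x α : ι → ℝ)
    {s : Set (κ → ι → ℝ)} (hs : Convex ℝ s) : ConcaveOn ℝ s (lagrangian w x α) := by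
  refine ⟨hs, fun β _ β' _ a b _ _ hab => le_of_eq ?_⟩
  simp only [lagrangian_eq, Pi.add_apply, Pi.smul_apply, smul_eq_mul, mul_add, sum_add_distrib,
    mul_left_comm _ a, mul_left_comm _ b, ← mul_sum]
  linear_combination (∑ j, α j * x j) * hab

theorem lagrangian_eq_of_colSums {β : κ → ι → ℝ} (hcol : ∀ j, ∑ k, β k j = x j) (α : ι → ℝ) :
    lagrangian w x α β = ∑ k, ∑ j, w k j * β k j := by
  simp [lagrangian, hcol]

theorem lagrangian_update [DecidableEq ι] (α : ι → ℝ) (β : κ → ι → ℝ) (j : ι) (s : ℝ) :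
    lagrangian w x (Function.update α j s) β
      = lagrangian w x α β + (s - α j) * (x j - ∑ k, β k j) := by
  have hupd : ∀ i, Function.update α j s i * (x i - ∑ k, β k i)
      = α i * (x i - ∑ k, β k i) + if i = j then (s - α j) * (x j - ∑ k, β k j) else 0 := by
    intro i
    by_cases hij : i = j
    · subst hij; simp only [Function.update_self, if_true]; ring
    · simp [hij]
  simp only [lagrangian, hupd, sum_add_distrib, sum_ite_eq', mem_univ, if_true]
  ring

variable [Nonempty ι]

theorem dualObjective_sub_lagrangian {β : κ → ι → ℝ} (hβ : β ∈ rowPlans z) (α : ι → ℝ) :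
    dualObjective w x z α - lagrangian w x α β
      = ∑ k, ∑ j, ((univ.sup' univ_nonempty fun j => w k j - α j) - (w k j - α j)) * β k j := by
  simp only [dualObjective, lagrangian_eq, ← hβ.2, sum_mul, sub_mul, sum_sub_distrib,
    mul_comm (β _ _)]
  ring

theorem lagrangian_le_dualObjective {β : κ → ι → ℝ} (hβ : β ∈ rowPlans z) (α : ι → ℝ) :
    lagrangian w x α β ≤ dualObjective w x z α := by
  rw [← sub_nonneg, dualObjective_sub_lagrangian hβ]
  exact sum_nonneg fun k _ => sum_nonneg fun j _ => sup'_sub_mul_nonneg _ j (hβ.1 k j)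

theorem exists_lagrangian_eq_dualObjective (hz : ∀ k, 0 ≤ z k) (α : ι → ℝ) :
    ∃ β ∈ rowPlans z, lagrangian w x α β = dualObjective w x z α := by
  classical
  choose σ _ hσ using fun k => exists_mem_eq_sup' univ_nonempty fun j => w k j - α j
  have hβ : (fun k j => if j = σ k then z k else 0) ∈ rowPlans z :=
    ⟨fun k j => by dsimp only; split_ifs <;> simp [hz k], fun k => by simp⟩
  refine ⟨_, hβ, (sub_eq_zero.mp ?_).symm⟩
  rw [dualObjective_sub_lagrangian hβ]
  refine sum_eq_zero fun k _ => sum_eq_zero fun j _ => ?_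
  split_ifs with hj
  · rw [hj, hσ, sub_self, zero_mul]
  · rw [mul_zero]

theorem sub_eq_sup'_of_lagrangian_eq {α : ι → ℝ} {β : κ → ι → ℝ} (hβ : β ∈ rowPlans z)
    (hαβ : lagrangian w x α β = dualObjective w x z α) {k : κ} {j : ι} (hkj : 0 < β k j) :
    w k j - α j = univ.sup' univ_nonempty fun j => w k j - α j := by
  have hsum := dualObjective_sub_lagrangian hβ α (w := w) (x := x)
  rw [hαβ, sub_self, eq_comm, sum_eq_zero_iff_of_nonneg fun k _ =>
    sum_nonneg fun j _ => sup'_sub_mul_nonneg _ j (hβ.1 k j)] at hsum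
  have hterm := (sum_eq_zero_iff_of_nonneg fun j _ => sup'_sub_mul_nonneg _ j (hβ.1 k j)).mp
    (hsum k (mem_univ k)) j (mem_univ j)
  rw [mul_eq_zero, sub_eq_zero] at hterm
  exact (hterm.resolve_right hkj.ne').symm

theorem transport_le_dualObjective {β : κ → ι → ℝ} (hβ : β ∈ rowPlans z)
    (hcol : ∀ j, ∑ k, β k j = x j) (α : ι → ℝ) :
    ∑ k, ∑ j, w k j * β k j ≤ dualObjective w x z α :=
  lagrangian_eq_of_colSums hcol α ▸ lagrangian_le_dualObjective hβ α

theorem lagrangian_eq_dualObjective_of_isSaddlePointOn {X : Set (ι → ℝ)} {a : ι → ℝ}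
    {b : κ → ι → ℝ} (ha : a ∈ X) (hb : b ∈ rowPlans z)
    (hab : IsSaddlePointOn X (rowPlans z) (lagrangian w x) a b) :
    lagrangian w x a b = dualObjective w x z a := by
  have hz : ∀ k, 0 ≤ z k := fun k => hb.2 k ▸ sum_nonneg fun j _ => hb.1 k j
  obtain ⟨β, hβ, hβa⟩ := exists_lagrangian_eq_dualObjective (w := w) (x := x) hz a
  exact (lagrangian_le_dualObjective hb a).antisymm (hβa ▸ hab a ha β hβ)

theorem colSums_eq_of_isSaddlePointOn {R : ℝ} (hR : ∀ k j j', w k j' - w k j < R)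
    (hx : ∀ j, 0 ≤ x j) (hxz : ∑ j, x j = ∑ k, z k) {a : ι → ℝ} {b : κ → ι → ℝ}
    (ha : a ∈ Set.Icc 0 fun _ => R) (hb : b ∈ rowPlans z)
    (hab : IsSaddlePointOn (Set.Icc 0 fun _ => R) (rowPlans z) (lagrangian w x) a b) (j : ι) :
    ∑ k, b k j = x j := by
  classical
  set r : ι → ℝ := fun j => x j - ∑ k, b k j
  have hsum : ∑ j, r j = 0 := by
    rw [sum_sub_distrib, sum_comm, hxz]
    simp [hb.2]
  have hcoord : ∀ j, ∀ s ∈ Set.Icc 0 R, 0 ≤ (s - a j) * r j := by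
    intro j s hs
    have hupd : Function.update a j s ∈ Set.Icc 0 fun _ => R := by
      have ha0 : ∀ i, 0 ≤ a i := ha.1
      have haR : ∀ i, a i ≤ R := ha.2
      constructor <;> intro i <;> by_cases hij : i = j <;> simp [hij, hs.1, hs.2, ha0, haR]
    have := hab _ hupd b hb
    rw [lagrangian_update] at this
    linarith
  -- An over-full column `j'` forces `a j' = R`; a row feeding it then makes every `a j`
  -- positive, so no column can be under-full, contradicting `∑ j, r j = 0`.
  have hr : ∀ j, 0 ≤ r j := by
    intro j'
    by_contra! hneg
    have hR0 : 0 ≤ R := (ha.1 j').trans (ha.2 j')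
    have haj' : R ≤ a j' := by nlinarith [hcoord j' R ⟨hR0, le_rfl⟩]
    obtain ⟨k, -, hk⟩ := (sum_pos_iff_of_nonneg fun k _ => hb.1 k j').mp
      (by linarith [hx j'] : 0 < ∑ k, b k j')
    have hmax := sub_eq_sup'_of_lagrangian_eq hb
      (lagrangian_eq_dualObjective_of_isSaddlePointOn ha hb hab) hk
    have hr_nonpos : ∀ j, r j ≤ 0 := by
      intro j
      have hpos : 0 < a j := by
        have := le_sup' (fun j => w k j - a j) (mem_univ j)
        linarith [hR k j j']
      nlinarith [hcoord j 0 ⟨le_rfl, hR0⟩]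
    have := sum_lt_sum (fun j _ => hr_nonpos j) ⟨j', mem_univ _, hneg⟩
    simp only [sum_const_zero] at this
    linarith
  have := (sum_eq_zero_iff_of_nonneg fun j _ => hr j).mp hsum j (mem_univ j)
  linarith

theorem exists_dualObjective_eq_transport (w : κ → ι → ℝ) (hx : ∀ j, 0 ≤ x j)
    (hz : ∀ k, 0 ≤ z k) (hxz : ∑ j, x j = ∑ k, z k) :
    ∃ a, ∃ b ∈ rowPlans z, (∀ j, ∑ k, b k j = x j)
      ∧ ∑ k, ∑ j, w k j * b k j = dualObjective w x z a := by
  obtain ⟨M, hM⟩ := Finite.exists_le fun q : κ × ι × ι => w q.1 q.2.2 - w q.1 q.2.1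
  have hR : ∀ k j j', w k j' - w k j < |M| + 1 := fun k j j' =>
    (hM (k, j, j')).trans_lt ((le_abs_self M).trans_lt (lt_add_one _))
  obtain ⟨a, ha, b, hb, hab⟩ := Sion.exists_isSaddlePointOn'
    (X := Set.Icc 0 fun _ => |M| + 1) (f := lagrangian w x)
    ⟨0, le_rfl, fun _ => by positivity⟩ isCompact_Icc
    (fun β _ => (continuous_lagrangian_left w x β).lowerSemicontinuous.lowerSemicontinuousOn _)
    (fun β _ => (convexOn_lagrangian_left w x β (convex_Icc _ _)).quasiconvexOn)
    (convex_rowPlans z) (isCompact_rowPlans z)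
    (fun α _ => (continuous_lagrangian_right w x α).upperSemicontinuous.upperSemicontinuousOn _)
    (fun α _ => (concaveOn_lagrangian_right w x α (convex_rowPlans z)).quasiconcaveOn)
    (convex_Icc _ _)
    ⟨_, (exists_lagrangian_eq_dualObjective (w := w) (x := x) hz 0).choose_spec.1⟩
  have hcol := colSums_eq_of_isSaddlePointOn hR hx hxz ha hb hab
  exact ⟨a, b, hb, hcol, (lagrangian_eq_of_colSums hcol a).symm.trans
    (lagrangian_eq_dualObjective_of_isSaddlePointOn ha hb hab)⟩

end Transport

open Transport

theorem stmt8_general {p d : ℕ} (hp : 0 < p)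
    (w : Fin d → Fin p → ℝ)
    (x : Fin p → ℝ) (hx : x ∈ stdSimplex ℝ (Fin p))
    (z : Fin d → ℝ) (hz : z ∈ stdSimplex ℝ (Fin d)) :
    ∃ T : ℝ,
      IsGreatest (transportSet p d w x z) T
      ∧ IsLeast
          {v : ℝ | ∃ α : Fin p → ℝ,
            v = ∑ j, α j * x j
              + ∑ k, z k * Finset.univ.sup' ⟨⟨0, hp⟩, Finset.mem_univ _⟩
                  (fun j => w k j - α j)} T := by
  have : Nonempty (Fin p) := ⟨⟨0, hp⟩⟩
  obtain ⟨a, b, hb, hcol, hab⟩ :=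
    exists_dualObjective_eq_transport w hx.1 hz.1 (hx.2.trans hz.2.symm)
  refine ⟨dualObjective w x z a, ⟨⟨b, hb.1, hcol, hb.2, hab.symm⟩, ?_⟩, ⟨a, rfl⟩, ?_⟩
  · rintro _ ⟨β, hβ0, hβcol, hβrow, rfl⟩
    exact transport_le_dualObjective ⟨hβ0, hβrow⟩ hβcol a
  · rintro _ ⟨α, rfl⟩
    exact hab ▸ transport_le_dualObjective hb hcol α

/-- The attained infimum over `α` of `Σ_j α_j x_j + Σ_k z_k · max_j (w^k_j − α_j)` equals
the max-weight transportation value `Transport(x, z; w¹, …, w^d)`. -/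
theorem stmt8 {p d : ℕ} (hp : 0 < p) (hd : 0 < d)
    (w : Fin d → Fin p → ℝ)
    (x : Fin p → ℝ) (hx : x ∈ stdSimplex ℝ (Fin p))
    (z : Fin d → ℝ) (hz : z ∈ stdSimplex ℝ (Fin d)) :
    ∃ T : ℝ,
      IsGreatest (transportSet p d w x z) T
      ∧ IsLeast
          {v : ℝ | ∃ α : Fin p → ℝ,
            v = ∑ j, α j * x j
              + ∑ k, z k * Finset.univ.sup' ⟨⟨0, hp⟩, Finset.mem_univ _⟩
                  (fun j => w k j - α j)} T :=
  stmt8_general hp w x hx z hz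
end
end

section
/- Let d = 2, and set w̃_j = w^1_j − w^2_j for each j = 1,…,p; assume the indices are sorted so that w̃_1 ≤ ⋯ ≤ w̃_p. Then for every x ∈ Δ^p and z ∈ Δ^2, Transport(x, z; w^1, w^2) = min_{J = 1,…,p} ( w̃_J z_1 + Σ_{j = J+1}^p (w̃_j − w̃_J) x_j ) + Σ_{j=1}^p w^2_j x_j. -/
noncomputable section

/-- Explicit fractional-knapsack formula for the transportation value when `d = 2`,
assuming the indices are sorted so that `w̃_1 ≤ ⋯ ≤ w̃_p` where `w̃_j = w¹_j − w²_j`. -/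
theorem stmt9 {p : ℕ} (hp : 0 < p)
    (w : Fin 2 → Fin p → ℝ)
    (hsorted : Monotone fun j : Fin p => w 0 j - w 1 j)
    (x : Fin p → ℝ) (hx : x ∈ stdSimplex ℝ (Fin p))
    (z : Fin 2 → ℝ) (hz : z ∈ stdSimplex ℝ (Fin 2)) :
    IsGreatest (transportSet p 2 w x z)
      (Finset.univ.inf' ⟨⟨0, hp⟩, Finset.mem_univ _⟩
        (fun J : Fin p => (w 0 J - w 1 J) * z 0
          + ∑ j ∈ Finset.univ.filter (fun j => J < j),
              ((w 0 j - w 1 j) - (w 0 J - w 1 J)) * x j)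
        + ∑ j, w 1 j * x j) := by
  classical
  obtain ⟨hx0, hx1⟩ := hx
  obtain ⟨hz0, hz1⟩ := hz
  have hz01 : z 0 + z 1 = 1 := by simpa [Fin.sum_univ_two] using hz1
  set f : Fin p → ℝ := fun J : Fin p => (w 0 J - w 1 J) * z 0
          + ∑ j ∈ Finset.univ.filter (fun j => J < j),
              ((w 0 j - w 1 j) - (w 0 J - w 1 J)) * x j with hf
  set c : ℝ := ∑ j, w 1 j * x j with hc
  -- Upper bound: every feasible value is at most `f J + c` for every `J`.
  have hub : ∀ s ∈ transportSet p 2 w x z, ∀ J : Fin p, s ≤ f J + c := by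
    rintro s ⟨β, hβ0, hβx, hβz, rfl⟩ J
    have hsum2 : ∀ j, β 0 j + β 1 j = x j := fun j => by
      simpa [Fin.sum_univ_two] using hβx j
    have hβle : ∀ j, β 0 j ≤ x j := fun j => by
      have h1 := hsum2 j; have h2 := hβ0 1 j; linarith
    have h1 : ∑ k, ∑ j, w k j * β k j
        = ∑ j, (w 0 j - w 1 j) * β 0 j + c := by
      rw [Fin.sum_univ_two, hc, ← Finset.sum_add_distrib, ← Finset.sum_add_distrib]
      refine Finset.sum_congr rfl fun j _ => ?_
      linear_combination w 1 j * hsum2 j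
    have h2 : ∑ j, (w 0 j - w 1 j) * β 0 j
        = ∑ j, ((w 0 j - w 1 j) - (w 0 J - w 1 J)) * β 0 j + (w 0 J - w 1 J) * z 0 := by
      rw [← hβz 0, Finset.mul_sum, ← Finset.sum_add_distrib]
      exact Finset.sum_congr rfl fun j _ => by ring
    have h3 : ∑ j, ((w 0 j - w 1 j) - (w 0 J - w 1 J)) * β 0 j
        ≤ ∑ j ∈ Finset.univ.filter (fun j => J < j),
            ((w 0 j - w 1 j) - (w 0 J - w 1 J)) * x j := by
      rw [← Finset.sum_filter_add_sum_filter_not Finset.univ (fun j => J < j)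
        (fun j => ((w 0 j - w 1 j) - (w 0 J - w 1 J)) * β 0 j)]
      have hA : ∑ j ∈ Finset.univ.filter (fun j => J < j),
            ((w 0 j - w 1 j) - (w 0 J - w 1 J)) * β 0 j
          ≤ ∑ j ∈ Finset.univ.filter (fun j => J < j),
            ((w 0 j - w 1 j) - (w 0 J - w 1 J)) * x j := by
        refine Finset.sum_le_sum fun j hj => ?_
        have hJj : J ≤ j := le_of_lt (by simpa using hj)
        have hm := hsorted hJj
        simp only at hm
        exact mul_le_mul_of_nonneg_left (hβle j) (by linarith)
      have hB : ∑ j ∈ Finset.univ.filter (fun j => ¬ J < j),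
            ((w 0 j - w 1 j) - (w 0 J - w 1 J)) * β 0 j ≤ 0 := by
        refine Finset.sum_nonpos fun j hj => ?_
        have hjJ : j ≤ J := le_of_not_gt (by simpa using hj)
        have hm := hsorted hjJ
        simp only at hm
        exact mul_nonpos_of_nonpos_of_nonneg (by linarith) (hβ0 0 j)
      linarith
    have hfJ : f J = (w 0 J - w 1 J) * z 0
        + ∑ j ∈ Finset.univ.filter (fun j => J < j),
            ((w 0 j - w 1 j) - (w 0 J - w 1 J)) * x j := rfl
    rw [h1]
    linarith [h2, h3]
  -- Greedy construction of the optimal transport plan.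
  have hz0nn : 0 ≤ z 0 := hz0 0
  have hzle1 : z 0 ≤ 1 := by have := hz0 1; linarith
  set t : ℕ → ℝ := fun n => ∑ j ∈ Finset.univ.filter (fun j : Fin p => n ≤ (j : ℕ)), x j
    with ht
  have ht0 : t 0 = 1 := by
    rw [ht]; dsimp only
    rw [show Finset.univ.filter (fun j : Fin p => 0 ≤ (j : ℕ)) = Finset.univ by
      ext j; simp]
    exact hx1
  have htp : ∀ n, p ≤ n → t n = 0 := by
    intro n hn; rw [ht]; dsimp only
    rw [show Finset.univ.filter (fun j : Fin p => n ≤ (j : ℕ)) = ∅ by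
      ext j; simp; omega]
    simp
  have htstep : ∀ n (hn : n < p), t n = x ⟨n, hn⟩ + t (n + 1) := by
    intro n hn
    have hins : Finset.univ.filter (fun j : Fin p => n ≤ (j : ℕ))
        = insert (⟨n, hn⟩ : Fin p) (Finset.univ.filter (fun j : Fin p => n + 1 ≤ (j : ℕ))) := by
      ext j; simp [Fin.ext_iff]; omega
    rw [ht]; dsimp only
    rw [hins, Finset.sum_insert (by simp)]
  have hex : ∃ n, t (n + 1) ≤ z 0 := ⟨p - 1, by rw [htp _ (by omega)]; exact hz0nn⟩
  set N := Nat.find hex with hNdef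
  have hN : t (N + 1) ≤ z 0 := Nat.find_spec hex
  have hNmin : ∀ m, m < N → z 0 < t (m + 1) := fun m hm =>
    lt_of_not_ge (Nat.find_min hex hm)
  have hNlt : N < p := by
    have : N ≤ p - 1 := Nat.find_le (by rw [htp _ (by omega)]; exact hz0nn)
    omega
  have hzN : z 0 ≤ t N := by
    rcases Nat.eq_zero_or_pos N with h | h
    · rw [h, ht0]; exact hzle1
    · obtain ⟨m, hm⟩ := Nat.exists_eq_succ_of_ne_zero (Nat.pos_iff_ne_zero.mp h)
      have h2 := hNmin m (by omega)
      simpa [hm, Nat.succ_eq_add_one] using h2.le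
  set b : Fin p → ℝ := fun j =>
    if N < (j : ℕ) then x j else if (j : ℕ) = N then z 0 - t (N + 1) else 0 with hb
  have hb0 : ∀ j, 0 ≤ b j := by
    intro j; rw [hb]; dsimp only
    split_ifs with h1 h2
    · exact hx0 j
    · linarith
    · exact le_refl 0
  have hblex : ∀ j, b j ≤ x j := by
    intro j; rw [hb]; dsimp only
    split_ifs with h1 h2
    · exact le_refl _
    · have hj : j = ⟨N, hNlt⟩ := Fin.ext h2
      rw [hj]
      have := htstep N hNlt
      linarith
    · exact hx0 j
  have hfilt : Finset.univ.filter (fun j : Fin p => N < (j : ℕ))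
      = Finset.univ.filter (fun j : Fin p => N + 1 ≤ (j : ℕ)) := by
    ext j; simp
  have htN1 : t (N + 1) = ∑ j ∈ Finset.univ.filter (fun j : Fin p => N < (j : ℕ)), x j := by
    rw [hfilt]
  have hNnotmem : (⟨N, hNlt⟩ : Fin p) ∈ Finset.univ.filter (fun j : Fin p => ¬ N < (j : ℕ)) := by
    simp
  have hbsum : ∑ j, b j = z 0 := by
    rw [← Finset.sum_filter_add_sum_filter_not Finset.univ (fun j : Fin p => N < (j : ℕ)) b]
    have e1 : ∑ j ∈ Finset.univ.filter (fun j : Fin p => N < (j : ℕ)), b j = t (N + 1) := by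
      rw [htN1]
      refine Finset.sum_congr rfl fun j hj => ?_
      have hj' : N < (j : ℕ) := by simpa using hj
      rw [hb]; dsimp only; rw [if_pos hj']
    have e2 : ∑ j ∈ Finset.univ.filter (fun j : Fin p => ¬ N < (j : ℕ)), b j
        = z 0 - t (N + 1) := by
      rw [Finset.sum_eq_single (⟨N, hNlt⟩ : Fin p)]
      · rw [hb]; simp
      · intro j hj hne
        have hj' : ¬ N < (j : ℕ) := by simpa using hj
        have hne' : (j : ℕ) ≠ N := fun h => hne (Fin.ext h)
        rw [hb]; dsimp only; rw [if_neg hj', if_neg hne']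
      · intro h; exact absurd hNnotmem h
    rw [e1, e2]; ring
  have hmem : (f ⟨N, hNlt⟩ + c) ∈ transportSet p 2 w x z := by
    refine ⟨![b, fun j => x j - b j], ?_, ?_, ?_, ?_⟩
    · intro k j
      fin_cases k
      · simpa using hb0 j
      · simpa using sub_nonneg.mpr (hblex j)
    · intro j; simp [Fin.sum_univ_two]
    · intro k
      fin_cases k
      · simpa using hbsum
      · have hseq : ∑ j, (x j - b j) = 1 - z 0 := by
          rw [Finset.sum_sub_distrib, hx1, hbsum]
        have hz1' : z 1 = 1 - z 0 := by linarith
        simpa [hz1'] using hseq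
    · rw [Fin.sum_univ_two]
      simp only [Matrix.cons_val_zero, Matrix.cons_val_one, Matrix.head_cons]
      have hval : ∑ j, w 0 j * b j + ∑ j, w 1 j * (x j - b j)
          = ∑ j, (w 0 j - w 1 j) * b j + c := by
        rw [hc, ← Finset.sum_add_distrib, ← Finset.sum_add_distrib]
        exact Finset.sum_congr rfl fun j _ => by ring
      rw [hval]
      have hsplit : ∑ j, (w 0 j - w 1 j) * b j
          = (∑ j ∈ Finset.univ.filter (fun j : Fin p => N < (j : ℕ)), (w 0 j - w 1 j) * x j)
            + (w 0 ⟨N, hNlt⟩ - w 1 ⟨N, hNlt⟩) * (z 0 - t (N + 1)) := by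
        rw [← Finset.sum_filter_add_sum_filter_not Finset.univ (fun j : Fin p => N < (j : ℕ))
          (fun j => (w 0 j - w 1 j) * b j)]
        congr 1
        · refine Finset.sum_congr rfl fun j hj => ?_
          have hj' : N < (j : ℕ) := by simpa using hj
          rw [hb]; dsimp only; rw [if_pos hj']
        · rw [Finset.sum_eq_single (⟨N, hNlt⟩ : Fin p)]
          · rw [hb]; simp
          · intro j hj hne
            have hj' : ¬ N < (j : ℕ) := by simpa using hj
            have hne' : (j : ℕ) ≠ N := fun h => hne (Fin.ext h)
            rw [hb]; dsimp only; rw [if_neg hj', if_neg hne']; ring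
          · intro h; exact absurd hNnotmem h
      have hfe : Finset.univ.filter (fun j : Fin p => (⟨N, hNlt⟩ : Fin p) < j)
          = Finset.univ.filter (fun j : Fin p => N < (j : ℕ)) := by
        ext j; simp [Fin.lt_def]
      have hfJ : f ⟨N, hNlt⟩ = (w 0 ⟨N, hNlt⟩ - w 1 ⟨N, hNlt⟩) * z 0
          + ∑ j ∈ Finset.univ.filter (fun j : Fin p => (⟨N, hNlt⟩ : Fin p) < j),
              ((w 0 j - w 1 j) - (w 0 ⟨N, hNlt⟩ - w 1 ⟨N, hNlt⟩)) * x j := rfl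
      have hexp : ∑ j ∈ Finset.univ.filter (fun j : Fin p => (⟨N, hNlt⟩ : Fin p) < j),
            ((w 0 j - w 1 j) - (w 0 ⟨N, hNlt⟩ - w 1 ⟨N, hNlt⟩)) * x j
          = (∑ j ∈ Finset.univ.filter (fun j : Fin p => N < (j : ℕ)), (w 0 j - w 1 j) * x j)
            - (w 0 ⟨N, hNlt⟩ - w 1 ⟨N, hNlt⟩) * t (N + 1) := by
        rw [hfe, htN1, Finset.mul_sum, ← Finset.sum_sub_distrib]
        exact Finset.sum_congr rfl fun j _ => by ring
      rw [hfJ, hexp, hsplit]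
      ring
  have hle : f ⟨N, hNlt⟩
      ≤ (Finset.univ : Finset (Fin p)).inf' ⟨⟨0, hp⟩, Finset.mem_univ _⟩ f := by
    refine Finset.le_inf' _ _ fun J _ => ?_
    have := hub _ hmem J
    linarith
  have hge : (Finset.univ : Finset (Fin p)).inf' ⟨⟨0, hp⟩, Finset.mem_univ _⟩ f
      ≤ f ⟨N, hNlt⟩ := Finset.inf'_le _ (Finset.mem_univ _)
  constructor
  · have heq : (Finset.univ : Finset (Fin p)).inf' ⟨⟨0, hp⟩, Finset.mem_univ _⟩ f
        = f ⟨N, hNlt⟩ := le_antisymm hge hle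
    rw [heq]; exact hmem
  · intro s hs
    have hss : s - c ≤ (Finset.univ : Finset (Fin p)).inf' ⟨⟨0, hp⟩, Finset.mem_univ _⟩ f := by
      refine Finset.le_inf' _ _ fun J _ => ?_
      have := hub s hs J
      linarith
    linarith
end
end

section
/- Suppose d = 2 and D = Δ^{p_1} × ⋯ × Δ^{p_τ} is a product of simplices. For each simplex i set w̃_{i,j} = w^1_{i,j} − w^2_{i,j} for j = 1,…,p_i, and assume the indices are relabeled so that w̃_{i,1} ≤ ⋯ ≤ w̃_{i,p_i}. Write z = z_1 and z_2 = 1 − z. Then for every (x, y, z) with x ∈ D and z ∈ [0,1], the following two conditions are equivalent: (a) for every α ∈ ℝ^η, y ≤ α · x + Σ_{k=1}^2 ( max_{x' ∈ D} (w^k − α) · x' + b^k ) z_k; (b) for every mapping J : {1,…,τ} → ℤ with J(i) ∈ {1,…,p_i} for all i, y ≤ Σ_{i=1}^τ ( w̃_{i,J(i)} z + Σ_{j = J(i)+1}^{p_i} (w̃_{i,j} − w̃_{i,J(i)}) x_{i,j} + Σ_{j=1}^{p_i} w^2_{i,j} x_{i,j} ) + (b^1 − b^2) z + b^2. -/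
noncomputable section

/-- The product of simplices `Δ^{p₁} × ⋯ × Δ^{p_τ}`, with coordinates indexed by pairs
`(i, j)` where `i : Fin τ` and `j : Fin (p i)`. -/
def Dprod {τ : ℕ} (p : Fin τ → ℕ) : Set ((Σ i : Fin τ, Fin (p i)) → ℝ) :=
  {x | ∀ i : Fin τ, (fun j : Fin (p i) => x ⟨i, j⟩) ∈ stdSimplex ℝ (Fin (p i))}

/-!
Both families of bounds split over the simplices, because the maximum of a linear function over
a product of simplices is the sum of the blockwise largest coefficients. On one block put
`u = w¹ - w²` and `h(t) = t z + ∑ⱼ (uⱼ - t)⁺ xⱼ`. For any `α`, the `α`-bound of the block is at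
least `h(t) + w²·x` with `t = max (w¹ - α) - max (w² - α)`, while `α = w² + (u - u_J)⁺` makes it
equal to `h(u_J) + w²·x`, which is the `J`-bound since `u` is sorted. Finally `h` is minimised at
`t = u_J` for a `z`-quantile `J` of the weights `x`, so the two families have the same infimum.
-/

open Finset

section Simplex

variable {ι : Type*} [Fintype ι]

lemma nonempty_of_mem_stdSimplex {x : ι → ℝ} (hx : x ∈ stdSimplex ℝ ι) : Nonempty ι := by
  by_contra h
  rw [not_nonempty_iff] at h
  simpa using hx.2

lemma sum_mul_le_iSup_of_mem_stdSimplex (c : ι → ℝ) {x : ι → ℝ} (hx : x ∈ stdSimplex ℝ ι) :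
    ∑ j, c j * x j ≤ ⨆ j, c j :=
  calc ∑ j, c j * x j ≤ ∑ j, (⨆ j, c j) * x j :=
        sum_le_sum fun j _ => mul_le_mul_of_nonneg_right (le_ciSup (Finite.bddAbove_range c) j)
          (hx.1 j)
    _ = ⨆ j, c j := by rw [← mul_sum, hx.2, mul_one]

lemma exists_mem_stdSimplex_sum_mul_eq_iSup [Nonempty ι] (c : ι → ℝ) :
    ∃ x ∈ stdSimplex ℝ ι, ∑ j, c j * x j = ⨆ j, c j := by
  classical
  obtain ⟨j₀, hj₀⟩ := exists_eq_ciSup_of_finite (f := c)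
  refine ⟨Pi.single j₀ 1, single_mem_stdSimplex ℝ j₀, ?_⟩
  simp [Pi.single_apply, hj₀]

end Simplex

lemma sSup_image_sum_mul_Dprod {τ : ℕ} {p : Fin τ → ℕ} [∀ i, Nonempty (Fin (p i))]
    (c : (Σ i : Fin τ, Fin (p i)) → ℝ) :
    sSup ((fun x' => ∑ q, c q * x' q) '' Dprod p) = ∑ i, ⨆ j, c ⟨i, j⟩ := by
  refine IsGreatest.csSup_eq ⟨?_, ?_⟩
  · choose v hv hvc using fun i => exists_mem_stdSimplex_sum_mul_eq_iSup fun j => c ⟨i, j⟩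
    refine ⟨fun q => v q.1 q.2, hv, ?_⟩
    simp only [Fintype.sum_sigma, hvc]
  · rintro _ ⟨x', hx', rfl⟩
    simp only [Fintype.sum_sigma]
    exact sum_le_sum fun i _ => sum_mul_le_iSup_of_mem_stdSimplex _ (hx' i)

section Values

variable {ι : Type*} [Fintype ι]

def hinge (u x : ι → ℝ) (z t : ℝ) : ℝ := t * z + ∑ j, max (u j - t) 0 * x j

def dualValue (w1 w2 x : ι → ℝ) (z : ℝ) (α : ι → ℝ) : ℝ :=
  ∑ j, α j * x j + (⨆ j, w1 j - α j) * z + (⨆ j, w2 j - α j) * (1 - z)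

lemma hinge_add_sum_mul_le_dualValue (w1 w2 : ι → ℝ) {x : ι → ℝ} (hx : x ∈ stdSimplex ℝ ι)
    (z : ℝ) (α : ι → ℝ) :
    hinge (fun j => w1 j - w2 j) x z ((⨆ j, w1 j - α j) - ⨆ j, w2 j - α j) + ∑ j, w2 j * x j
      ≤ dualValue w1 w2 x z α := by
  set M₁ := ⨆ j, w1 j - α j
  set M₂ := ⨆ j, w2 j - α j
  have hM₁ : ∀ j, w1 j - α j ≤ M₁ := le_ciSup (Finite.bddAbove_range _)
  have hM₂ : ∀ j, w2 j - α j ≤ M₂ := le_ciSup (Finite.bddAbove_range _)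
  have hle : ∑ j, max (w1 j - w2 j - (M₁ - M₂)) 0 * x j ≤ ∑ j, (M₂ - (w2 j - α j)) * x j :=
    sum_le_sum fun j _ => mul_le_mul_of_nonneg_right
      (max_le (by linarith [hM₁ j]) (by linarith [hM₂ j])) (hx.1 j)
  simp only [sub_mul, sum_sub_distrib, ← mul_sum, hx.2, mul_one] at hle
  rw [hinge, dualValue]
  linarith

end Values

section LinearOrder

variable {ι : Type*} [Fintype ι] [LinearOrder ι]

def cutValue (w1 w2 x : ι → ℝ) (z : ℝ) (J : ι) : ℝ :=
  (w1 J - w2 J) * z + ∑ j ∈ univ.filter (J < ·), ((w1 j - w2 j) - (w1 J - w2 J)) * x j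
    + ∑ j, w2 j * x j

lemma exists_sum_filter_lt_le_le_sum_filter_le [Nonempty ι] {x : ι → ℝ} (hx : ∑ j, x j = 1)
    {z : ℝ} (hz₀ : 0 ≤ z) (hz₁ : z ≤ 1) :
    ∃ J, ∑ j ∈ univ.filter (J < ·), x j ≤ z ∧ z ≤ ∑ j ∈ univ.filter (J ≤ ·), x j := by
  set S := univ.filter fun J => z ≤ ∑ j ∈ univ.filter (J ≤ ·), x j
  have hS : S.Nonempty := ⟨univ.min' univ_nonempty, by
    simpa [S, min'_le, hx] using hz₁⟩
  refine ⟨S.max' hS, ?_, (mem_filter.1 (S.max'_mem hS)).2⟩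
  set J := S.max' hS
  by_contra! hlt
  set T := univ.filter (J < ·)
  have hT : T.Nonempty := by
    by_contra hT
    rw [not_nonempty_iff_eq_empty.1 hT, sum_empty] at hlt
    linarith
  have hJ' : univ.filter (T.min' hT ≤ ·) = T := by
    ext j
    simp only [mem_filter, mem_univ, true_and, T]
    exact ⟨fun h => (mem_filter.1 (T.min'_mem hT)).2.trans_le h,
      fun h => T.min'_le j (by simpa [T] using h)⟩
  have hmem : T.min' hT ∈ S := by simpa [S, hJ'] using hlt.le
  exact (S.le_max' _ hmem).not_gt (mem_filter.1 (T.min'_mem hT)).2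

lemma hinge_apply_of_monotone {u : ι → ℝ} (hu : Monotone u) (x : ι → ℝ) (z : ℝ) (J : ι) :
    hinge u x z (u J) = u J * z + ∑ j ∈ univ.filter (J < ·), (u j - u J) * x j := by
  rw [hinge, sum_filter]
  congr 1
  refine sum_congr rfl fun j _ => ?_
  split_ifs with h
  · rw [max_eq_left (sub_nonneg.2 (hu h.le))]
  · rw [max_eq_right (sub_nonpos.2 (hu (not_lt.1 h))), zero_mul]

lemma exists_forall_le_hinge (u : ι → ℝ) {x : ι → ℝ} (hx : x ∈ stdSimplex ℝ ι) {z : ℝ}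
    (hz₀ : 0 ≤ z) (hz₁ : z ≤ 1) :
    ∃ J, ∀ t, u J * z + ∑ j ∈ univ.filter (J < ·), (u j - u J) * x j ≤ hinge u x z t := by
  have := nonempty_of_mem_stdSimplex hx
  obtain ⟨J, hlt, hle⟩ := exists_sum_filter_lt_le_le_sum_filter_le hx.2 hz₀ hz₁
  refine ⟨J, fun t => ?_⟩
  have hpart : ∀ s : Finset ι, ∑ j ∈ s, (u j - t) * x j ≤ ∑ j, max (u j - t) 0 * x j :=
    fun s => calc
      ∑ j ∈ s, (u j - t) * x j ≤ ∑ j ∈ s, max (u j - t) 0 * x j :=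
        sum_le_sum fun j _ => mul_le_mul_of_nonneg_right (le_max_left _ _) (hx.1 j)
      _ ≤ ∑ j, max (u j - t) 0 * x j :=
        sum_le_sum_of_subset_of_nonneg (subset_univ s) fun j _ _ =>
          mul_nonneg (le_max_right _ _) (hx.1 j)
  have hshift : ∀ s : Finset ι,
      ∑ j ∈ s, (u j - t) * x j = ∑ j ∈ s, (u j - u J) * x j + (u J - t) * ∑ j ∈ s, x j := by
    intro s
    rw [mul_sum, ← sum_add_distrib]
    exact sum_congr rfl fun j _ => by ring
  rw [hinge]
  rcases le_total (u J) t with h | h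
  · have := hpart (univ.filter (J < ·))
    rw [hshift] at this
    nlinarith
  · have hJ : ∑ j ∈ univ.filter (J ≤ ·), (u j - u J) * x j
        = ∑ j ∈ univ.filter (J < ·), (u j - u J) * x j := by
      refine (sum_subset (fun j hj => ?_) fun j hj hj' => ?_).symm
      · simpa using (mem_filter.1 hj).2.le
      · simp only [mem_filter, mem_univ, true_and, not_lt] at hj hj'
        rw [le_antisymm hj' hj, sub_self, zero_mul]
    have := hpart (univ.filter (J ≤ ·))
    rw [hshift, hJ] at this
    nlinarith

lemma exists_dualValue_le_cutValue {w1 w2 : ι → ℝ} (hw : Monotone fun j => w1 j - w2 j)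
    (x : ι → ℝ) (z : ℝ) (J : ι) : ∃ α, dualValue w1 w2 x z α ≤ cutValue w1 w2 x z J := by
  set t := w1 J - w2 J
  refine ⟨fun j => w2 j + max (w1 j - w2 j - t) 0, ?_⟩
  have := Nonempty.intro J
  have hsup₁ : ⨆ j, w1 j - (w2 j + max (w1 j - w2 j - t) 0) = t :=
    le_antisymm (ciSup_le fun j => by linarith [le_max_left (w1 j - w2 j - t) 0])
      (le_ciSup_of_le (Finite.bddAbove_range _) J (by simp [t]))
  have hsup₂ : ⨆ j, w2 j - (w2 j + max (w1 j - w2 j - t) 0) = 0 :=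
    le_antisymm (ciSup_le fun j => by linarith [le_max_right (w1 j - w2 j - t) 0])
      (le_ciSup_of_le (Finite.bddAbove_range _) J (by simp [t]))
  rw [dualValue, hsup₁, hsup₂, cutValue, ← hinge_apply_of_monotone hw x z]
  simp only [hinge, add_mul, sum_add_distrib]
  linarith

lemma exists_cutValue_le_dualValue (w1 w2 : ι → ℝ) {x : ι → ℝ} (hx : x ∈ stdSimplex ℝ ι)
    {z : ℝ} (hz₀ : 0 ≤ z) (hz₁ : z ≤ 1) (α : ι → ℝ) :
    ∃ J, cutValue w1 w2 x z J ≤ dualValue w1 w2 x z α := by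
  obtain ⟨J, hJ⟩ := exists_forall_le_hinge (fun j => w1 j - w2 j) hx hz₀ hz₁
  refine ⟨J, ?_⟩
  have := hinge_add_sum_mul_le_dualValue w1 w2 hx z α
  rw [cutValue]
  linarith [hJ ((⨆ j, w1 j - α j) - ⨆ j, w2 j - α j)]

end LinearOrder

lemma le_sum_of_forall_le_sum {κ : Type*} [Fintype κ] {α β : κ → Type*}
    {A : ∀ i, α i → ℝ} {B : ∀ i, β i → ℝ} (hAB : ∀ i b, ∃ a, A i a ≤ B i b) {y : ℝ}
    (hy : ∀ a : ∀ i, α i, y ≤ ∑ i, A i (a i)) (b : ∀ i, β i) : y ≤ ∑ i, B i (b i) := by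
  choose a ha using fun i => hAB i (b i)
  exact (hy a).trans (sum_le_sum fun i _ => ha i)

theorem stmt10_general {τ : ℕ} (p : Fin τ → ℕ)
    (w1 w2 : (Σ i : Fin τ, Fin (p i)) → ℝ) (b1 b2 : ℝ)
    (hsorted : ∀ i : Fin τ, Monotone fun j : Fin (p i) => w1 ⟨i, j⟩ - w2 ⟨i, j⟩)
    (x : (Σ i : Fin τ, Fin (p i)) → ℝ) (hx : x ∈ Dprod p)
    (z : ℝ) (hz : z ∈ Set.Icc (0 : ℝ) 1) (y : ℝ) :
    (∀ α : (Σ i : Fin τ, Fin (p i)) → ℝ,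
      y ≤ ∑ q, α q * x q
        + (sSup ((fun x' => ∑ q, (w1 q - α q) * x' q) '' Dprod p) + b1) * z
        + (sSup ((fun x' => ∑ q, (w2 q - α q) * x' q) '' Dprod p) + b2) * (1 - z))
    ↔ (∀ J : (i : Fin τ) → Fin (p i),
      y ≤ ∑ i, ((w1 ⟨i, J i⟩ - w2 ⟨i, J i⟩) * z
          + ∑ j ∈ Finset.univ.filter (fun j => J i < j),
              ((w1 ⟨i, j⟩ - w2 ⟨i, j⟩) - (w1 ⟨i, J i⟩ - w2 ⟨i, J i⟩)) * x ⟨i, j⟩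
          + ∑ j, w2 ⟨i, j⟩ * x ⟨i, j⟩)
        + (b1 - b2) * z + b2) := by
  have := fun i => nonempty_of_mem_stdSimplex (hx i)
  set c := b1 * z + b2 * (1 - z)
  have hdual : ∀ α : (Σ i : Fin τ, Fin (p i)) → ℝ, ∑ q, α q * x q
      + (sSup ((fun x' => ∑ q, (w1 q - α q) * x' q) '' Dprod p) + b1) * z
      + (sSup ((fun x' => ∑ q, (w2 q - α q) * x' q) '' Dprod p) + b2) * (1 - z)
      = ∑ i, dualValue (fun j => w1 ⟨i, j⟩) (fun j => w2 ⟨i, j⟩) (fun j => x ⟨i, j⟩) z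
          (fun j => α ⟨i, j⟩) + c := by
    intro α
    rw [sSup_image_sum_mul_Dprod, sSup_image_sum_mul_Dprod]
    simp only [dualValue, Fintype.sum_sigma, sum_add_distrib, ← sum_mul]
    ring
  simp only [hdual, ← sub_le_iff_le_add]
  constructor
  · intro h J
    have := le_sum_of_forall_le_sum (fun i => exists_dualValue_le_cutValue (hsorted i) _ z)
      (fun a => h (Sigma.uncurry a)) J
    simp only [cutValue] at this
    linarith
  · intro h α
    refine le_sum_of_forall_le_sum (fun i => exists_cutValue_le_dualValue _ _ (hx i) hz.1 hz.2)
      (fun J => ?_) fun i j => α ⟨i, j⟩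
    simp only [cutValue]
    linarith [h J]

/-- Equivalence, over a product of simplices and with `d = 2` (with `z₁ = z`, `z₂ = 1 − z`),
of the infinite dual family of upper bounds and the finite family indexed by mappings `J`.
Since `D` is a nonempty compact set, the maxima over `D` are attained and coincide with the
`sSup` of the corresponding image sets. -/
theorem stmt10 {τ : ℕ} (hτ : 1 ≤ τ) (p : Fin τ → ℕ) (hp : ∀ i, 1 ≤ p i)
    (w1 w2 : (Σ i : Fin τ, Fin (p i)) → ℝ) (b1 b2 : ℝ)
    (hsorted : ∀ i : Fin τ, Monotone fun j : Fin (p i) => w1 ⟨i, j⟩ - w2 ⟨i, j⟩)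
    (x : (Σ i : Fin τ, Fin (p i)) → ℝ) (hx : x ∈ Dprod p)
    (z : ℝ) (hz : z ∈ Set.Icc (0 : ℝ) 1) (y : ℝ) :
    (∀ α : (Σ i : Fin τ, Fin (p i)) → ℝ,
      y ≤ ∑ q, α q * x q
        + (sSup ((fun x' => ∑ q, (w1 q - α q) * x' q) '' Dprod p) + b1) * z
        + (sSup ((fun x' => ∑ q, (w2 q - α q) * x' q) '' Dprod p) + b2) * (1 - z))
    ↔ (∀ J : (i : Fin τ) → Fin (p i),
      y ≤ ∑ i, ((w1 ⟨i, J i⟩ - w2 ⟨i, J i⟩) * z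
          + ∑ j ∈ Finset.univ.filter (fun j => J i < j),
              ((w1 ⟨i, j⟩ - w2 ⟨i, j⟩) - (w1 ⟨i, J i⟩ - w2 ⟨i, J i⟩)) * x ⟨i, j⟩
          + ∑ j, w2 ⟨i, j⟩ * x ⟨i, j⟩)
        + (b1 - b2) * z + b2) :=
  stmt10_general p w1 w2 b1 b2 hsorted x hx z hz y
end
end

section
/- With the setup of the product-of-simplices, d = 2, sorted-weights case, for each mapping J : {1,…,τ} → ℤ with J(i) ∈ {1,…,p_i} for all i, define the halfspace H_J = {(x, y, z) ∈ ℝ^η × ℝ × ℝ : y ≤ Σ_{i=1}^τ ( w̃_{i,J(i)} z + Σ_{j = J(i)+1}^{p_i} (w̃_{i,j} − w̃_{i,J(i)}) x_{i,j} + Σ_{j=1}^{p_i} w^2_{i,j} x_{i,j} ) + (b^1 − b^2) z + b^2}, and let P be the intersection of H_{J'} over all such mappings J'. Then the family of halfspaces is irredundant: for every mapping J, the intersection of all H_{J'} over mappings J' with H_{J'} ≠ H_J (as subsets of ℝ^η × ℝ × ℝ) is a strict superset of P. -/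
/-!
At the point `x = 𝟙_J` (the vertex of the product of simplices selected by `J`), `z = 1/2`,
the right-hand side of `H_{J'}` exceeds that of `H_J` by `∑ᵢ |w̃_{i,J'(i)} - w̃_{i,J(i)}| / 2`.
If this gap vanishes, `J'` and `J` pick tied weights in every simplex, and then, the weights
being sorted, `H_{J'} = H_J`. So every halfspace different from `H_J` lies strictly above `H_J`
at this `(x, z)`, and raising `y` just above the bound of `H_J` gives a point that violates
`H_J` only.
-/

noncomputable section

/-- The halfspace `H_J` associated with the mapping `J`, in the variables `(x, y, z)`. -/
def halfspaceJ {τ : ℕ} (p : Fin τ → ℕ)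
    (w1 w2 : (Σ i : Fin τ, Fin (p i)) → ℝ) (b1 b2 : ℝ)
    (J : (i : Fin τ) → Fin (p i)) :
    Set (((Σ i : Fin τ, Fin (p i)) → ℝ) × ℝ × ℝ) :=
  {q | q.2.1 ≤ ∑ i, ((w1 ⟨i, J i⟩ - w2 ⟨i, J i⟩) * q.2.2
      + ∑ j ∈ Finset.univ.filter (fun j => J i < j),
          ((w1 ⟨i, j⟩ - w2 ⟨i, j⟩) - (w1 ⟨i, J i⟩ - w2 ⟨i, J i⟩)) * q.1 ⟨i, j⟩
      + ∑ j, w2 ⟨i, j⟩ * q.1 ⟨i, j⟩)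
    + (b1 - b2) * q.2.2 + b2}

open Finset

theorem exists_gt_forall_le_of_forall_lt {ι α : Type*} [Finite ι] [LinearOrder α]
    [NoMaxOrder α] {s : Set ι} {f : ι → α} {a : α} (h : ∀ i ∈ s, a < f i) :
    ∃ y, a < y ∧ ∀ i ∈ s, y ≤ f i := by
  rcases s.eq_empty_or_nonempty with rfl | hs
  · obtain ⟨y, hy⟩ := exists_gt a
    exact ⟨y, hy, by simp⟩
  · obtain ⟨i, hi, hmin⟩ := Set.exists_min_image s f s.toFinite hs
    exact ⟨f i, h i hi, hmin⟩

section SimplexTerm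

variable {ι : Type*} [Fintype ι] [LinearOrder ι]

/-- The part of the `i`-th summand of `H_J` that depends on `J`, with `v = w̃_i` and `a = J(i)`. -/
def simplexTerm (v : ι → ℝ) (a : ι) (z : ℝ) (x : ι → ℝ) : ℝ :=
  v a * z + ∑ j ∈ univ.filter (fun j => a < j), (v j - v a) * x j

theorem simplexTerm_eq_sum_filter_value_lt {v : ι → ℝ} (hv : Monotone v) (a : ι) (z : ℝ)
    (x : ι → ℝ) :
    simplexTerm v a z x = v a * z + ∑ j ∈ univ.filter (fun j => v a < v j), (v j - v a) * x j := by
  unfold simplexTerm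
  congr 1
  refine (sum_subset (fun j hj => ?_) fun j hj hj' => ?_).symm
  · simp only [mem_filter, mem_univ, true_and] at hj ⊢
    exact hv.reflect_lt hj
  · simp only [mem_filter, mem_univ, true_and, not_lt] at hj hj'
    rw [le_antisymm hj' (hv hj.le), sub_self, zero_mul]

theorem simplexTerm_congr {v : ι → ℝ} (hv : Monotone v) {a b : ι} (h : v a = v b) :
    simplexTerm v a = simplexTerm v b := by
  ext z x
  rw [simplexTerm_eq_sum_filter_value_lt hv, simplexTerm_eq_sum_filter_value_lt hv, h]

theorem simplexTerm_single (v : ι → ℝ) (a c : ι) (z : ℝ) :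
    simplexTerm v a z (Pi.single c 1) = v a * z + if a < c then v c - v a else 0 := by
  simp [simplexTerm, Pi.single_apply, sum_ite_eq']

theorem simplexTerm_single_sub {v : ι → ℝ} (hv : Monotone v) (a c : ι) :
    simplexTerm v a (1 / 2) (Pi.single c 1) - simplexTerm v c (1 / 2) (Pi.single c 1)
      = |v a - v c| / 2 := by
  rw [simplexTerm_single, simplexTerm_single, if_neg (lt_irrefl c)]
  split_ifs with hac
  · rw [abs_of_nonpos (sub_nonpos.2 (hv hac.le))]
    ring
  · rw [abs_of_nonneg (sub_nonneg.2 (hv (not_lt.1 hac)))]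
    ring

end SimplexTerm

def halfspaceBound {τ : ℕ} (p : Fin τ → ℕ) (w1 w2 : (Σ i : Fin τ, Fin (p i)) → ℝ)
    (b1 b2 : ℝ) (J : (i : Fin τ) → Fin (p i)) (x : (Σ i : Fin τ, Fin (p i)) → ℝ) (z : ℝ) : ℝ :=
  ∑ i, (simplexTerm (fun j => w1 ⟨i, j⟩ - w2 ⟨i, j⟩) (J i) z (fun j => x ⟨i, j⟩)
      + ∑ j, w2 ⟨i, j⟩ * x ⟨i, j⟩)
    + (b1 - b2) * z + b2

def simplexVertex {τ : ℕ} {p : Fin τ → ℕ} (J : (i : Fin τ) → Fin (p i)) :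
    (Σ i : Fin τ, Fin (p i)) → ℝ :=
  fun s => (Pi.single (J s.1) 1 : Fin (p s.1) → ℝ) s.2

section Halfspaces

variable {τ : ℕ} {p : Fin τ → ℕ} {w1 w2 : (Σ i : Fin τ, Fin (p i)) → ℝ} {b1 b2 : ℝ}

theorem mem_halfspaceJ {J : (i : Fin τ) → Fin (p i)}
    {q : ((Σ i : Fin τ, Fin (p i)) → ℝ) × ℝ × ℝ} :
    q ∈ halfspaceJ p w1 w2 b1 b2 J ↔ q.2.1 ≤ halfspaceBound p w1 w2 b1 b2 J q.1 q.2.2 :=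
  Iff.rfl

theorem halfspaceJ_eq_of_forall_weight_eq
    (hsorted : ∀ i : Fin τ, Monotone fun j : Fin (p i) => w1 ⟨i, j⟩ - w2 ⟨i, j⟩)
    {J J' : (i : Fin τ) → Fin (p i)}
    (h : ∀ i, w1 ⟨i, J' i⟩ - w2 ⟨i, J' i⟩ = w1 ⟨i, J i⟩ - w2 ⟨i, J i⟩) :
    halfspaceJ p w1 w2 b1 b2 J' = halfspaceJ p w1 w2 b1 b2 J := by
  ext q
  simp only [mem_halfspaceJ, halfspaceBound, simplexTerm_congr (hsorted _) (h _)]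

theorem halfspaceBound_sub_at_simplexVertex
    (hsorted : ∀ i : Fin τ, Monotone fun j : Fin (p i) => w1 ⟨i, j⟩ - w2 ⟨i, j⟩)
    (J J' : (i : Fin τ) → Fin (p i)) :
    halfspaceBound p w1 w2 b1 b2 J' (simplexVertex J) (1 / 2)
        - halfspaceBound p w1 w2 b1 b2 J (simplexVertex J) (1 / 2)
      = ∑ i, |(w1 ⟨i, J' i⟩ - w2 ⟨i, J' i⟩) - (w1 ⟨i, J i⟩ - w2 ⟨i, J i⟩)| / 2 := by
  rw [← sum_congr rfl fun i _ => simplexTerm_single_sub (hsorted i) (J' i) (J i)]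
  simp only [halfspaceBound, simplexVertex, sum_add_distrib, sum_sub_distrib]
  ring

theorem halfspaceBound_lt_at_simplexVertex_of_ne
    (hsorted : ∀ i : Fin τ, Monotone fun j : Fin (p i) => w1 ⟨i, j⟩ - w2 ⟨i, j⟩)
    {J J' : (i : Fin τ) → Fin (p i)}
    (hne : halfspaceJ p w1 w2 b1 b2 J' ≠ halfspaceJ p w1 w2 b1 b2 J) :
    halfspaceBound p w1 w2 b1 b2 J (simplexVertex J) (1 / 2)
      < halfspaceBound p w1 w2 b1 b2 J' (simplexVertex J) (1 / 2) := by
  obtain ⟨i, hi⟩ : ∃ i, w1 ⟨i, J' i⟩ - w2 ⟨i, J' i⟩ ≠ w1 ⟨i, J i⟩ - w2 ⟨i, J i⟩ := by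
    by_contra! h
    exact hne (halfspaceJ_eq_of_forall_weight_eq hsorted h)
  rw [← sub_pos, halfspaceBound_sub_at_simplexVertex hsorted]
  refine sum_pos' (fun k _ => by positivity) ⟨i, mem_univ i, ?_⟩
  exact half_pos (abs_pos.2 (sub_ne_zero.2 hi))

end Halfspaces

theorem stmt11_general {τ : ℕ} (p : Fin τ → ℕ)
    (w1 w2 : (Σ i : Fin τ, Fin (p i)) → ℝ) (b1 b2 : ℝ)
    (hsorted : ∀ i : Fin τ, Monotone fun j : Fin (p i) => w1 ⟨i, j⟩ - w2 ⟨i, j⟩)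
    (J : (i : Fin τ) → Fin (p i)) :
    (⋂ J' : (i : Fin τ) → Fin (p i), halfspaceJ p w1 w2 b1 b2 J')
      ⊂ ⋂ J' ∈ {J' : (i : Fin τ) → Fin (p i) |
          halfspaceJ p w1 w2 b1 b2 J' ≠ halfspaceJ p w1 w2 b1 b2 J},
          halfspaceJ p w1 w2 b1 b2 J' := by
  obtain ⟨y, hJy, hyJ'⟩ := exists_gt_forall_le_of_forall_lt
    (f := fun J' => halfspaceBound p w1 w2 b1 b2 J' (simplexVertex J) (1 / 2))
    fun J' hJ' => halfspaceBound_lt_at_simplexVertex_of_ne hsorted hJ'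
  refine (Set.ssubset_iff_of_subset (Set.subset_iInter₂ fun J' _ => Set.iInter_subset _ J')).2
    ⟨(simplexVertex J, y, 1 / 2), ?_, ?_⟩
  · exact Set.mem_iInter₂.2 fun J' hJ' => mem_halfspaceJ.2 (hyJ' J' hJ')
  · exact fun hmem => (Set.mem_iInter.1 hmem J |> mem_halfspaceJ.1 |>.trans_lt hJy).false

/-- Irredundancy of the family of halfspaces `H_J`: removing (all copies of) any one
halfspace strictly enlarges the intersection. -/
theorem stmt11 {τ : ℕ} (hτ : 1 ≤ τ) (p : Fin τ → ℕ) (hp : ∀ i, 1 ≤ p i)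
    (w1 w2 : (Σ i : Fin τ, Fin (p i)) → ℝ) (b1 b2 : ℝ)
    (hsorted : ∀ i : Fin τ, Monotone fun j : Fin (p i) => w1 ⟨i, j⟩ - w2 ⟨i, j⟩)
    (J : (i : Fin τ) → Fin (p i)) :
    (⋂ J' : (i : Fin τ) → Fin (p i), halfspaceJ p w1 w2 b1 b2 J')
      ⊂ ⋂ J' ∈ {J' : (i : Fin τ) → Fin (p i) |
          halfspaceJ p w1 w2 b1 b2 J' ≠ halfspaceJ p w1 w2 b1 b2 J},
          halfspaceJ p w1 w2 b1 b2 J' :=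
  stmt11_general p w1 w2 b1 b2 hsorted J
end
end

section
/- Fix an integer d ≥ 1 and weights w^k_1, w^k_2 ∈ ℝ for k = 1,…,d; set w̃^k = w^k_1 − w^k_2 and assume the indices are sorted so that w̃^1 ≤ ⋯ ≤ w̃^d. Then for every x ∈ Δ^2 and z ∈ Δ^d, Transport(x, z; w^1, …, w^d) = min_{K = 1,…,d} ( w̃^K x_1 + Σ_{k=1}^K w^k_2 z_k + Σ_{k = K+1}^d (w^k_1 − w̃^K) z_k ). -/
noncomputable section

lemma aux_ub {d : ℕ} (wt : Fin d → ℝ) (hs : Monotone wt)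
    (x0 : ℝ) (z t : Fin d → ℝ) (ht0 : ∀ k, 0 ≤ t k) (htz : ∀ k, t k ≤ z k)
    (htx : ∑ k, t k = x0) (K : Fin d) :
    ∑ k, wt k * t k ≤ wt K * x0
      + ∑ k ∈ Finset.univ.filter (fun j => K < j), (wt k - wt K) * z k := by
  have h1 : ∑ k, wt k * t k = wt K * x0 + ∑ k, (wt k - wt K) * t k := by
    rw [← htx, Finset.mul_sum, ← Finset.sum_add_distrib]
    exact Finset.sum_congr rfl fun k _ => by ring
  have h2 : ∑ k, (wt k - wt K) * t k
      ≤ ∑ k, (if K < k then (wt k - wt K) * z k else 0) := by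
    apply Finset.sum_le_sum
    intro k _
    by_cases hk : K < k
    · simp only [if_pos hk]
      have hw := hs hk.le
      nlinarith [htz k, ht0 k]
    · simp only [if_neg hk]
      have hw : wt k ≤ wt K := hs (le_of_not_gt hk)
      nlinarith [ht0 k]
  rw [h1, Finset.sum_filter]
  linarith

lemma aux_ex {d : ℕ} (hd : 0 < d) (x0 : ℝ) (hx0 : 0 ≤ x0) (hx1 : x0 ≤ 1)
    (z : Fin d → ℝ) (hz0 : ∀ k, 0 ≤ z k) (hz1 : ∑ k, z k = 1) :
    ∃ (K : Fin d) (t : Fin d → ℝ), (∀ k, 0 ≤ t k) ∧ (∀ k, t k ≤ z k) ∧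
      (∀ f : Fin d → ℝ, ∑ k, f k * t k
        = f K * (x0 - ∑ k ∈ Finset.univ.filter (fun j => K < j), z k)
          + ∑ k ∈ Finset.univ.filter (fun j => K < j), f k * z k) := by
  classical
  set S : Fin d → ℝ := fun K => ∑ k ∈ Finset.univ.filter (fun j => K < j), z k with hSdef
  have hlast : S ⟨d - 1, by omega⟩ ≤ x0 := by
    have : Finset.univ.filter (fun j => (⟨d - 1, by omega⟩ : Fin d) < j) = ∅ := by
      ext k
      simp [Fin.lt_def]
      omega
    simp [hSdef, this, hx0]
  set F := Finset.univ.filter (fun K : Fin d => S K ≤ x0) with hF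
  have hFne : F.Nonempty := ⟨⟨d - 1, by omega⟩, by simp [hF, hlast]⟩
  set K := F.min' hFne with hK
  have hKF : S K ≤ x0 := (Finset.mem_filter.mp (F.min'_mem hFne)).2
  have hKmin : ∀ K' : Fin d, K' < K → x0 < S K' := by
    intro K' hK'
    by_contra h
    push_neg at h
    have : K' ∈ F := by simp [hF, h]
    exact absurd (F.min'_le _ this) (not_le.mpr hK')
  have hsplitK : Finset.univ.filter (fun j => K ≤ j)
      = insert K (Finset.univ.filter (fun j => K < j)) := by
    ext k
    simp only [Finset.mem_filter, Finset.mem_univ, true_and, Finset.mem_insert]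
    constructor
    · intro h
      rcases eq_or_lt_of_le h with h | h
      · exact Or.inl h.symm
      · exact Or.inr h
    · rintro (rfl | h)
      · exact le_refl _
      · exact h.le
  -- key: x0 - S K ≤ z K
  have hupper : x0 - S K ≤ z K := by
    by_cases h0 : (K : ℕ) = 0
    · -- S K + z K = sum over {K} ∪ Ioi K = all of univ = 1
      have hall : Finset.univ.filter (fun j : Fin d => K ≤ j) = Finset.univ := by
        ext k
        simp only [Finset.mem_filter, Finset.mem_univ, true_and, iff_true, Fin.le_def]
        omega
      have : (1 : ℝ) = z K + S K := by
        rw [← hz1, ← hall, hsplitK, Finset.sum_insert (by simp)]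
      linarith
    · have hK' : ((⟨(K : ℕ) - 1, by omega⟩ : Fin d)) < K := by
        simp [Fin.lt_def]; omega
      have h := hKmin _ hK'
      have hsplit : Finset.univ.filter (fun j => (⟨(K : ℕ) - 1, by omega⟩ : Fin d) < j)
          = insert K (Finset.univ.filter (fun j => K < j)) := by
        ext k
        simp only [Finset.mem_filter, Finset.mem_univ, true_and, Finset.mem_insert,
          Fin.lt_def, Fin.ext_iff]
        omega
      have hSK' : S (⟨(K : ℕ) - 1, by omega⟩) = z K + S K := by
        rw [hSdef]
        simp only
        rw [hsplit, Finset.sum_insert (by simp)]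
      rw [hSK'] at h
      linarith
  refine ⟨K, fun k => if k < K then 0 else if k = K then x0 - S K else z k, ?_, ?_, ?_⟩
  · intro k
    by_cases h1 : k < K
    · simp [h1]
    · by_cases h2 : k = K
      · simp [h1, h2]; linarith
      · simp [h1, h2]; exact hz0 k
  · intro k
    by_cases h1 : k < K
    · simp [h1]; exact hz0 k
    · by_cases h2 : k = K
      · subst h2; simp [h1]; linarith
      · simp [h1, h2]
  · intro f
    have hzero : ∀ k ∈ (Finset.univ : Finset (Fin d)),
        k ∉ Finset.univ.filter (fun j : Fin d => K ≤ j) →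
        f k * (if k < K then 0 else if k = K then x0 - S K else z k) = 0 := by
      intro k _ hk
      simp only [Finset.mem_filter, Finset.mem_univ, true_and, not_le] at hk
      simp [hk]
    rw [← Finset.sum_subset (Finset.filter_subset _ _) hzero]
    rw [hsplitK, Finset.sum_insert (by simp)]
    have h1 : f K * (if K < K then (0:ℝ) else if K = K then x0 - S K else z K) = f K * (x0 - S K) := by
      simp
    rw [h1]
    congr 1
    apply Finset.sum_congr rfl
    intro k hk
    simp only [Finset.mem_filter, Finset.mem_univ, true_and] at hk
    rw [if_neg (by exact not_lt.mpr hk.le), if_neg (by exact fun h => absurd h (ne_of_gt hk))]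

/-- Explicit formula for the transportation value when `p = 2`, assuming the indices are
sorted so that `w̃^1 ≤ ⋯ ≤ w̃^d` where `w̃^k = w^k_1 − w^k_2`. -/
theorem stmt12 {d : ℕ} (hd : 0 < d)
    (w : Fin d → Fin 2 → ℝ)
    (hsorted : Monotone fun k : Fin d => w k 0 - w k 1)
    (x : Fin 2 → ℝ) (hx : x ∈ stdSimplex ℝ (Fin 2))
    (z : Fin d → ℝ) (hz : z ∈ stdSimplex ℝ (Fin d)) :
    IsGreatest (transportSet 2 d w x z)
      (Finset.univ.inf' ⟨⟨0, hd⟩, Finset.mem_univ _⟩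
        fun K : Fin d => (w K 0 - w K 1) * x 0
          + ∑ k ∈ Finset.univ.filter (fun k => k ≤ K), w k 1 * z k
          + ∑ k ∈ Finset.univ.filter (fun k => K < k),
              (w k 0 - (w K 0 - w K 1)) * z k) := by
  classical
  obtain ⟨hxpos, hx1⟩ := hx
  obtain ⟨hzpos, hz1⟩ := hz
  have hx01 : x 0 + x 1 = 1 := by rw [← hx1]; simp [Fin.sum_univ_two]
  -- rewrite each expression
  have hform : ∀ K : Fin d,
      (w K 0 - w K 1) * x 0
          + ∑ k ∈ Finset.univ.filter (fun k => k ≤ K), w k 1 * z k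
          + ∑ k ∈ Finset.univ.filter (fun k => K < k), (w k 0 - (w K 0 - w K 1)) * z k
      = (∑ k, w k 1 * z k) + ((w K 0 - w K 1) * x 0
          + ∑ k ∈ Finset.univ.filter (fun k => K < k),
              ((w k 0 - w k 1) - (w K 0 - w K 1)) * z k) := by
    intro K
    have h1 : ∑ k ∈ Finset.univ.filter (fun k : Fin d => K < k), (w k 0 - (w K 0 - w K 1)) * z k
        = ∑ k ∈ Finset.univ.filter (fun k : Fin d => K < k),
            (w k 1 * z k + ((w k 0 - w k 1) - (w K 0 - w K 1)) * z k) := by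
      exact Finset.sum_congr rfl fun k _ => by ring
    have h2 : (∑ k ∈ Finset.univ.filter (fun k : Fin d => k ≤ K), w k 1 * z k)
        + ∑ k ∈ Finset.univ.filter (fun k : Fin d => K < k), w k 1 * z k
        = ∑ k, w k 1 * z k := by
      rw [← Finset.sum_filter_add_sum_filter_not Finset.univ (fun k => k ≤ K)]
      congr 1
      apply Finset.sum_congr _ fun _ _ => rfl
      ext k
      simp [not_le]
    rw [h1, Finset.sum_add_distrib]
    linarith
  -- upper bound
  have hub : ∀ s ∈ transportSet 2 d w x z, ∀ K : Fin d,
      s ≤ (w K 0 - w K 1) * x 0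
          + ∑ k ∈ Finset.univ.filter (fun k => k ≤ K), w k 1 * z k
          + ∑ k ∈ Finset.univ.filter (fun k => K < k), (w k 0 - (w K 0 - w K 1)) * z k := by
    intro s hs K
    obtain ⟨β, hβ0, hβx, hβz, hβs⟩ := hs
    have hzk : ∀ k, β k 1 = z k - β k 0 := by
      intro k
      have := hβz k
      rw [Fin.sum_univ_two] at this
      linarith
    have hseq : s = (∑ k, w k 1 * z k) + ∑ k, (w k 0 - w k 1) * β k 0 := by
      rw [hβs, ← Finset.sum_add_distrib]
      apply Finset.sum_congr rfl
      intro k _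
      rw [Fin.sum_univ_two, hzk k]
      ring
    rw [hform K, hseq]
    have := aux_ub (fun k => w k 0 - w k 1) hsorted (x 0) z (fun k => β k 0)
      (fun k => hβ0 k 0) (fun k => by have := hβ0 k 1; rw [hzk k] at this; linarith)
      (hβx 0) K
    linarith
  -- existence of optimizer
  obtain ⟨K, t, ht0, htz, hident⟩ := aux_ex hd (x 0) (hxpos 0)
    (by have := hxpos 1; linarith) z hzpos hz1
  have hsum_t : ∑ k, t k = x 0 := by
    have := hident (fun _ => 1)
    simp only [one_mul] at this
    rw [this]
    ring
  set S : ℝ := ∑ k ∈ Finset.univ.filter (fun j => K < j), z k with hSdef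
  have hmem : ((w K 0 - w K 1) * x 0
          + ∑ k ∈ Finset.univ.filter (fun k => k ≤ K), w k 1 * z k
          + ∑ k ∈ Finset.univ.filter (fun k => K < k), (w k 0 - (w K 0 - w K 1)) * z k)
      ∈ transportSet 2 d w x z := by
    refine ⟨fun k j => if j = 0 then t k else z k - t k, ?_, ?_, ?_, ?_⟩
    · intro k j
      fin_cases j
      · simpa using ht0 k
      · simpa using sub_nonneg.mpr (htz k)
    · intro j
      fin_cases j
      · simpa using hsum_t
      · simp only [Fin.mk_one]
        have : ∑ k, (if (1 : Fin 2) = 0 then t k else z k - t k) = ∑ k, (z k - t k) := by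
          apply Finset.sum_congr rfl; intro k _; norm_num
        rw [this, Finset.sum_sub_distrib, hz1, hsum_t]
        linarith
    · intro k
      rw [Fin.sum_univ_two]
      norm_num
    · rw [hform K]
      have hobj : ∑ k, ∑ j, w k j * (if j = 0 then t k else z k - t k)
          = (∑ k, w k 1 * z k) + ∑ k, (w k 0 - w k 1) * t k := by
        rw [← Finset.sum_add_distrib]
        apply Finset.sum_congr rfl
        intro k _
        rw [Fin.sum_univ_two]
        norm_num
        ring
      rw [hobj, hident (fun k => w k 0 - w k 1)]
      have hexp : ∑ k ∈ Finset.univ.filter (fun j => K < j),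
          ((w k 0 - w k 1) - (w K 0 - w K 1)) * z k
          = (∑ k ∈ Finset.univ.filter (fun j => K < j), (w k 0 - w k 1) * z k)
            - (w K 0 - w K 1) * S := by
        rw [hSdef, Finset.mul_sum, ← Finset.sum_sub_distrib]
        apply Finset.sum_congr rfl
        intro k _
        ring
      rw [hexp]
      ring
  constructor
  · have hle : (Finset.univ.inf' ⟨⟨0, hd⟩, Finset.mem_univ _⟩
        fun K : Fin d => (w K 0 - w K 1) * x 0
          + ∑ k ∈ Finset.univ.filter (fun k => k ≤ K), w k 1 * z k
          + ∑ k ∈ Finset.univ.filter (fun k => K < k),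
              (w k 0 - (w K 0 - w K 1)) * z k)
        = (w K 0 - w K 1) * x 0
          + ∑ k ∈ Finset.univ.filter (fun k => k ≤ K), w k 1 * z k
          + ∑ k ∈ Finset.univ.filter (fun k => K < k), (w k 0 - (w K 0 - w K 1)) * z k := by
      apply le_antisymm
      · exact Finset.inf'_le _ (Finset.mem_univ K)
      · apply Finset.le_inf'
        intro K' _
        exact hub _ hmem K'
    rw [hle]
    exact hmem
  · intro s hs
    apply Finset.le_inf'
    intro K' _
    exact hub s hs K'
end
end

section
/- Fix (x̂, ŷ, ẑ) ∈ [L, U] × ℝ_{≥0} × [0, 1], and define Î = { i ∈ {1,…,η} : w_i x̂_i < w_i ( L̆_i (1 − ẑ) + Ŭ_i ẑ ) }. For a subset I ⊆ {1,…,η}, define RHS(I) = b ẑ + Σ_{i ∈ I} w_i (x̂_i − L̆_i (1 − ẑ)) + Σ_{i ∉ I} w_i Ŭ_i ẑ. Then RHS(Î) ≤ RHS(I) for every subset I ⊆ {1,…,η}. Consequently, if ŷ > RHS(Î), the constraint y ≤ RHS(Î) indexed by Î is a most violated member of the family {y ≤ RHS(I) : I ⊆ {1,…,η}} at (x̂,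 ŷ, ẑ); otherwise no inequality in the family is violated at (x̂, ŷ, ẑ). -/
open scoped Classical

noncomputable section

/-- `L̆_i`: `L_i` if `w_i ≥ 0`, else `U_i`. -/
def breveL {n : ℕ} (w L U : Fin n → ℝ) (i : Fin n) : ℝ := if 0 ≤ w i then L i else U i

/-- `Ŭ_i`: `U_i` if `w_i ≥ 0`, else `L_i`. -/
def breveU {n : ℕ} (w L U : Fin n → ℝ) (i : Fin n) : ℝ := if 0 ≤ w i then U i else L i

theorem stmt16 {η : ℕ} (hη : 1 ≤ η)
    (w : Fin η → ℝ) (b : ℝ)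
    (L U : Fin η → ℝ) (hLU : ∀ i, L i ≤ U i)
    (xh : Fin η → ℝ) (hxh : ∀ i, L i ≤ xh i ∧ xh i ≤ U i)
    (yh : ℝ) (hyh : 0 ≤ yh)
    (zh : ℝ) (hzh : 0 ≤ zh ∧ zh ≤ 1)
    -- RHS(I)
    (RHS : Finset (Fin η) → ℝ)
    (hRHS : RHS = fun I => b * zh
      + ∑ i ∈ I, w i * (xh i - breveL w L U i * (1 - zh))
      + ∑ i ∈ Iᶜ, w i * breveU w L U i * zh)
    -- Î
    (Ih : Finset (Fin η))
    (hIh : Ih = Finset.univ.filter fun i =>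
      w i * xh i < w i * (breveL w L U i * (1 - zh) + breveU w L U i * zh)) :
    -- Î minimizes the right-hand side over all subsets
    (∀ I : Finset (Fin η), RHS Ih ≤ RHS I)
    -- if ŷ > RHS(Î), the constraint indexed by Î is a most violated one
    ∧ (yh > RHS Ih → ∀ I : Finset (Fin η), yh - RHS I ≤ yh - RHS Ih)
    -- otherwise, no inequality in the family is violated
    ∧ (yh ≤ RHS Ih → ∀ I : Finset (Fin η), yh ≤ RHS I) := by
  set a : Fin η → ℝ := fun i => w i * (xh i - breveL w L U i * (1 - zh)) with ha
  set c : Fin η → ℝ := fun i => w i * breveU w L U i * zh with hc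
  have key : ∀ I : Finset (Fin η), RHS I = b * zh + (∑ i, c i) + ∑ i ∈ I, (a i - c i) := by
    intro I
    have hcompl : ∑ i ∈ Iᶜ, c i = (∑ i, c i) - ∑ i ∈ I, c i := by
      rw [eq_sub_iff_add_eq, Finset.sum_compl_add_sum]
    rw [hRHS]
    simp only [Finset.sum_sub_distrib, hcompl]
    ring
  have hmem : ∀ i, i ∈ Ih ↔ a i - c i < 0 := by
    intro i
    rw [hIh]
    simp only [Finset.mem_filter, Finset.mem_univ, true_and, ha, hc]
    constructor <;> intro h <;> nlinarith
  have main : ∀ I : Finset (Fin η), RHS Ih ≤ RHS I := by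
    intro I
    rw [key, key]
    have h1 : ∑ i ∈ Ih, (a i - c i) ≤ ∑ i ∈ I ∩ Ih, (a i - c i) := by
      have := Finset.sum_le_sum_of_subset_of_nonneg
        (f := fun i => -(a i - c i)) (Finset.inter_subset_right : I ∩ Ih ⊆ Ih)
        (fun i hi _ => by have := (hmem i).mp hi; linarith)
      simp only [Finset.sum_neg_distrib] at this
      linarith
    have h2 : ∑ i ∈ I ∩ Ih, (a i - c i) ≤ ∑ i ∈ I, (a i - c i) := by
      apply Finset.sum_le_sum_of_subset_of_nonneg (Finset.inter_subset_left)
      intro i hi hni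
      have : i ∉ Ih := fun h => hni (Finset.mem_inter.mpr ⟨hi, h⟩)
      have := (hmem i).not.mp this
      linarith
    linarith
  exact ⟨main, fun _ I => by have := main I; linarith,
    fun h I => le_trans h (main I)⟩
end
end
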